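/- arXiv:1604.08844 — 4 statements merged into one kernel-verified Lean document; each statement's English description precedes it below -/
import Mathlib

section
/- For every E ∈ R_p one has 2·Σ_{1 ≤ i < j ≤ n} x(E)_{i,j} = Σ_{k=1}^n |λ_k − λ_{w(E)(k)}|. -/
open Finset

/-- Valid index pairs `1 ≤ i < j ≤ n` for type `A`. -/
def ValidPair (n : ℕ) (p : ℕ × ℕ) : Prop :=
  1 ≤ p.1 ∧ p.1 < p.2 ∧ p.2 ≤ n

/-- One step of a Dyck path: move to the upper-right or the bottom-right neighbour. -/
def PathStep (p q : ℕ × ℕ) : Prop :=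
  q = (p.1 + 1, p.2) ∨ q = (p.1, p.2 + 1)

/-- A (type `A`) Dyck path. -/
def IsDyckPath (n : ℕ) (d : List (ℕ × ℕ)) : Prop :=
  d ≠ [] ∧ (∀ p ∈ d, ValidPair n p) ∧
  (∃ i, d.head? = some (i, i + 1)) ∧
  (∃ i, d.getLast? = some (i, i + 1)) ∧
  List.Chain' PathStep d

/-- `S(x,d)`, the sum of the coordinates of `x` along the path `d`. -/
noncomputable def Sval (x : ℕ × ℕ → ℝ) (d : List (ℕ × ℕ)) : ℝ :=
  (d.map x).sum

/-- `M(λ,d) = a_{i₁} + a_{i₁+1} + … + a_{i_N}` for the weight with coordinates `a`. -/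
def Mval (a : ℕ → ℕ) (d : List (ℕ × ℕ)) : ℕ :=
  ∑ i ∈ (d.map Prod.fst).toFinset, a i

/-- The FFLV polytope `P_λ` of the `sl_n`-weight with fundamental-weight coordinates `a`,
realized inside the functions `ℕ × ℕ → ℝ` supported on valid pairs. -/
def FFLV (n : ℕ) (a : ℕ → ℕ) : Set (ℕ × ℕ → ℝ) :=
  {x | (∀ p, ¬ ValidPair n p → x p = 0) ∧ (∀ p, 0 ≤ x p) ∧
       ∀ d, IsDyckPath n d → Sval x d ≤ (Mval a d : ℝ)}

/-- The partial order `≼` on pairs. -/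
def preceq (p q : ℕ × ℕ) : Prop := p.1 ≤ q.1 ∧ p.2 ≤ q.2

/-- The set `Q_i = {(k,l) : 1 ≤ k ≤ i, i+1 ≤ l ≤ n}`. -/
def Qset (n i : ℕ) : Set (ℕ × ℕ) :=
  {p | 1 ≤ p.1 ∧ p.1 ≤ i ∧ i + 1 ≤ p.2 ∧ p.2 ≤ n}

/-- The indicator vector `χ_A` of a set of pairs. -/
noncomputable def chi (A : Set (ℕ × ℕ)) : ℕ × ℕ → ℝ :=
  A.indicator fun _ => (1 : ℝ)

/-- The Dyck path `d^{i,j} = ((i,i+1),…,(i,j),(i+1,j),…,(j-1,j))`. -/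
def dseg (i j : ℕ) : List (ℕ × ℕ) :=
  ((List.range (j - i)).map fun t => (i, i + 1 + t)) ++
  ((List.range (j - i - 1)).map fun t => (i + 1 + t, j))

/-- `x` is the point `x(E)`: it vanishes outside `E` and for `[i,j] ∈ E` one has
`S(x(E),d^{i,j}) = a_i + … + a_{j-1}`. -/
def IsXE (n : ℕ) (a : ℕ → ℕ) (E : Finset (ℕ × ℕ)) (x : ℕ × ℕ → ℝ) : Prop :=
  (∀ p, p ∉ E → x p = 0) ∧
  ∀ p ∈ E, Sval x (dseg p.1 p.2) = ∑ k ∈ Finset.Ico p.1 p.2, (a k : ℝ)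

/-- `E ∈ R_p`: a set of segments (encoded by their endpoint pairs) inside `[1,n]` such that
the (nonempty) intersection of any two of its segments is a positive-length segment of `E`. -/
def Rp (n : ℕ) (E : Finset (ℕ × ℕ)) : Prop :=
  (∀ p ∈ E, ValidPair n p) ∧
  ∀ p ∈ E, ∀ q ∈ E, max p.1 q.1 ≤ min p.2 q.2 →
    max p.1 q.1 < min p.2 q.2 ∧ (max p.1 q.1, min p.2 q.2) ∈ E

/-- `p` is a peak of the Dyck path `d`. -/
def IsPeak (d : List (ℕ × ℕ)) (p : ℕ × ℕ) : Prop :=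
  p ∈ d ∧ (p.1, p.2 - 1) ∈ d ∧ (p.1 + 1, p.2) ∈ d

/-- `p` is a valley of the Dyck path `d`. -/
def IsValley (d : List (ℕ × ℕ)) (p : ℕ × ℕ) : Prop :=
  p ∈ d ∧ (p.1 - 1, p.2) ∈ d ∧ (p.1, p.2 + 1) ∈ d

/-- A list of segments sorted so that longer segments come first
(hence shorter transpositions are applied first in the product). -/
def SortedByLength (l : List (ℕ × ℕ)) : Prop :=
  List.Pairwise (fun p q => q.2 - q.1 ≤ p.2 - p.1) l

/-- The product of the transpositions `(i j)` over a list of segments `[i,j]`. -/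
def segSwapProd (l : List (ℕ × ℕ)) : Equiv.Perm ℕ :=
  (l.map fun p => Equiv.swap p.1 p.2).prod

/-- `λ_k = a_k + a_{k+1} + … + a_{n-1}` (and `λ_n = 0`). -/
def lamwt (n : ℕ) (a : ℕ → ℕ) (k : ℕ) : ℕ :=
  ∑ t ∈ Finset.Ico k n, a t

/-- The finite set of valid pairs `1 ≤ i < j ≤ n`. -/
def validPairs (n : ℕ) : Finset (ℕ × ℕ) :=
  (Finset.Icc 1 n ×ˢ Finset.Icc 1 n).filter fun p => p.1 < p.2

-- auxiliary lemmas
lemma lamwt_antitone (n : ℕ) (a : ℕ → ℕ) {k k' : ℕ} (h : k ≤ k') :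
    lamwt n a k' ≤ lamwt n a k :=
  Finset.sum_le_sum_of_subset (Finset.Ico_subset_Ico h le_rfl)

lemma lamwt_sub (n : ℕ) (a : ℕ → ℕ) {i j : ℕ} (hij : i ≤ j) (hj : j ≤ n) :
    (lamwt n a i : ℝ) - (lamwt n a j : ℝ) = ∑ k ∈ Finset.Ico i j, (a k : ℝ) := by
  have h : ∑ k ∈ Finset.Ico i j, (a k : ℕ) + ∑ k ∈ Finset.Ico j n, a k
      = ∑ k ∈ Finset.Ico i n, a k :=
    Finset.sum_Ico_consecutive _ hij hj
  unfold lamwt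
  have := congrArg (fun m : ℕ => (m : ℝ)) h
  push_cast at this ⊢
  linarith

lemma mem_dseg {i j : ℕ} (hij : i < j) {q : ℕ × ℕ} :
    q ∈ dseg i j ↔ (q.1 = i ∧ i < q.2 ∧ q.2 ≤ j) ∨ (q.2 = j ∧ i < q.1 ∧ q.1 < j) := by
  obtain ⟨u, v⟩ := q
  simp only [dseg, List.mem_append, List.mem_map, List.mem_range, Prod.mk.injEq]
  constructor
  · rintro (⟨t, ht, h1, h2⟩ | ⟨t, ht, h1, h2⟩) <;> omega
  · rintro (⟨h1, h2, h3⟩ | ⟨h1, h2, h3⟩)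
    · exact Or.inl ⟨v - i - 1, by omega, by omega, by omega⟩
    · exact Or.inr ⟨u - i - 1, by omega, by omega, by omega⟩

lemma dseg_nodup (i j : ℕ) : (dseg i j).Nodup := by
  unfold dseg
  refine List.Nodup.append ?_ ?_ ?_
  · exact List.nodup_range.map (fun s t h => by
      simpa using congrArg Prod.snd h)
  · exact List.nodup_range.map (fun s t h => by
      simpa using congrArg Prod.fst h)
  · intro q hq hq'
    simp only [List.mem_map, List.mem_range] at hq hq'
    obtain ⟨t, ht, rfl⟩ := hq
    obtain ⟨s, hs, h⟩ := hq'
    have := congrArg Prod.fst h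
    simp at this
    omega

lemma segSwapProd_nil : segSwapProd [] = 1 := rfl

lemma segSwapProd_cons (p : ℕ × ℕ) (l : List (ℕ × ℕ)) :
    segSwapProd (p :: l) = Equiv.swap p.1 p.2 * segSwapProd l := by
  simp [segSwapProd]

lemma segSwapProd_fix {l : List (ℕ × ℕ)} {c : ℕ} (h : ∀ q ∈ l, q.1 ≠ c ∧ q.2 ≠ c) :
    segSwapProd l c = c := by
  induction l with
  | nil => rfl
  | cons p l ih =>
    have hp := h p (List.mem_cons_self)
    rw [segSwapProd_cons]
    rw [Equiv.Perm.mul_apply, ih (fun q hq => h q (List.mem_cons_of_mem _ hq)),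
      Equiv.swap_apply_of_ne_of_ne (Ne.symm hp.1) (Ne.symm hp.2)]

lemma segSwapProd_inv_fix {l : List (ℕ × ℕ)} {c : ℕ} (h : ∀ q ∈ l, q.1 ≠ c ∧ q.2 ≠ c) :
    (segSwapProd l)⁻¹ c = c := by
  have := segSwapProd_fix h
  exact Equiv.Perm.inv_eq_iff_eq.mpr this.symm

lemma no_touch {n : ℕ} {E : Finset (ℕ × ℕ)} (hRp : Rp n E) {q r : ℕ × ℕ}
    (hq : q ∈ E) (hr : r ∈ E) (h : q.2 = r.1) : False := by
  have h1 := (hRp.1 q hq).2.1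
  have h2 := (hRp.1 r hr).2.1
  have h3 := hRp.2 q hq r hr (by omega)
  omega

lemma segSwapProd_range {n : ℕ} {l : List (ℕ × ℕ)}
    (h : ∀ q ∈ l, 1 ≤ q.1 ∧ q.1 ≤ n ∧ 1 ≤ q.2 ∧ q.2 ≤ n) (c : ℕ) :
    segSwapProd l c = c ∨
      (1 ≤ c ∧ c ≤ n ∧ 1 ≤ segSwapProd l c ∧ segSwapProd l c ≤ n) := by
  induction l with
  | nil => exact Or.inl rfl
  | cons p l ih =>
    have hp := h p (List.mem_cons_self)
    have ih' := ih (fun q hq => h q (List.mem_cons_of_mem _ hq))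
    rw [segSwapProd_cons, Equiv.Perm.mul_apply]
    rcases ih' with h1 | h1
    · rw [h1, Equiv.swap_apply_def]
      split_ifs with e1 e2
      · right; omega
      · right; omega
      · exact Or.inl rfl
    · rw [Equiv.swap_apply_def]
      split_ifs with e1 e2
      · right; omega
      · right; omega
      · right; omega

lemma segSwapProd_inv_range {n : ℕ} {l : List (ℕ × ℕ)}
    (h : ∀ q ∈ l, 1 ≤ q.1 ∧ q.1 ≤ n ∧ 1 ≤ q.2 ∧ q.2 ≤ n) {c : ℕ}
    (hc : 1 ≤ c ∧ c ≤ n) : 1 ≤ (segSwapProd l)⁻¹ c ∧ (segSwapProd l)⁻¹ c ≤ n := by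
  rcases segSwapProd_range h ((segSwapProd l)⁻¹ c) with h1 | h1
  · rw [show segSwapProd l ((segSwapProd l)⁻¹ c) = c from Equiv.Perm.eq_inv_iff_eq.mp rfl] at h1
    omega
  · rw [show segSwapProd l ((segSwapProd l)⁻¹ c) = c from Equiv.Perm.eq_inv_iff_eq.mp rfl] at h1
    exact ⟨h1.1, h1.2.1⟩

lemma sval_eq_sum {x : ℕ × ℕ → ℝ} {d : List (ℕ × ℕ)} (hd : d.Nodup) :
    Sval x d = ∑ q ∈ d.toFinset, x q := by
  rw [Sval, List.sum_toFinset _ hd]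

lemma path_filter_eq {n : ℕ} {E : Finset (ℕ × ℕ)} (hRp : Rp n E) {p : ℕ × ℕ}
    (hp : p ∈ E) (hmax : ∀ q ∈ E, q.2 - q.1 ≤ p.2 - p.1) :
    (dseg p.1 p.2).toFinset.filter (fun q => q ∈ E) =
      insert p (((E.erase p).filter (fun q => q.1 = p.1)) ∪
        ((E.erase p).filter (fun q => q.2 = p.2))) := by
  classical
  have hij : p.1 < p.2 := (hRp.1 p hp).2.1
  ext q
  simp only [Finset.mem_filter, List.mem_toFinset, mem_dseg hij, Finset.mem_insert,
    Finset.mem_union, Finset.mem_erase]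
  constructor
  · rintro ⟨hd, hqE⟩
    by_cases hqp : q = p
    · exact Or.inl hqp
    · rcases hd with h1 | h1
      · exact Or.inr (Or.inl ⟨⟨hqp, hqE⟩, h1.1⟩)
      · exact Or.inr (Or.inr ⟨⟨hqp, hqE⟩, h1.1⟩)
  · rintro (rfl | ⟨⟨hqp, hqE⟩, h1⟩ | ⟨⟨hqp, hqE⟩, h1⟩)
    · exact ⟨Or.inl ⟨rfl, hij, le_rfl⟩, hp⟩
    · have h2 := hmax q hqE
      have h3 := (hRp.1 q hqE).2.1
      exact ⟨Or.inl ⟨h1, by omega, by omega⟩, hqE⟩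
    · have h2 := hmax q hqE
      have h3 := (hRp.1 q hqE).2.1
      have h4 : q.1 ≠ p.1 := by
        intro h5
        exact hqp (Prod.ext h5 h1)
      exact ⟨Or.inr ⟨h1, by omega, by omega⟩, hqE⟩

lemma key_eq {n : ℕ} {a : ℕ → ℕ} {E : Finset (ℕ × ℕ)} {x : ℕ × ℕ → ℝ}
    (hRp : Rp n E) (hx : IsXE n a E x) {p : ℕ × ℕ}
    (hp : p ∈ E) (hmax : ∀ q ∈ E, q.2 - q.1 ≤ p.2 - p.1) :
    x p + (∑ q ∈ (E.erase p).filter (fun q => q.1 = p.1), x q)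
        + (∑ q ∈ (E.erase p).filter (fun q => q.2 = p.2), x q)
      = (lamwt n a p.1 : ℝ) - (lamwt n a p.2 : ℝ) := by
  classical
  have hval := hRp.1 p hp
  have hij : p.1 < p.2 := hval.2.1
  have heq := hx.2 p hp
  rw [sval_eq_sum (dseg_nodup _ _)] at heq
  rw [← Finset.sum_filter_of_ne (p := fun q => q ∈ E)
    (fun q _ hq => by by_contra h; exact hq (hx.1 q h))] at heq
  rw [path_filter_eq hRp hp hmax] at heq
  have hdisj : Disjoint ((E.erase p).filter (fun q => q.1 = p.1))
      ((E.erase p).filter (fun q => q.2 = p.2)) := by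
    rw [Finset.disjoint_left]
    intro q hq1 hq2
    simp only [Finset.mem_filter, Finset.mem_erase] at hq1 hq2
    exact hq1.1.1 (Prod.ext hq1.2 hq2.2)
  have hpnot : p ∉ ((E.erase p).filter (fun q => q.1 = p.1)) ∪
      ((E.erase p).filter (fun q => q.2 = p.2)) := by
    simp only [Finset.mem_union, Finset.mem_filter, Finset.mem_erase]
    rintro (⟨⟨h1, _⟩, _⟩ | ⟨⟨h1, _⟩, _⟩) <;> exact h1 rfl
  rw [Finset.sum_insert hpnot, Finset.sum_union hdisj] at heq
  rw [lamwt_sub n a (le_of_lt hij) hval.2.2]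
  linarith [heq]

lemma erase_Rp {n : ℕ} {E : Finset (ℕ × ℕ)} (hRp : Rp n E) {p : ℕ × ℕ} (hp : p ∈ E)
    (hmax : ∀ q ∈ E, q.2 - q.1 ≤ p.2 - p.1) : Rp n (E.erase p) := by
  classical
  have hij : p.1 < p.2 := (hRp.1 p hp).2.1
  constructor
  · exact fun q hq => hRp.1 q (Finset.mem_of_mem_erase hq)
  · intro q hq q' hq' hcond
    obtain ⟨hlt, hmemE⟩ := hRp.2 q (Finset.mem_of_mem_erase hq) q'
      (Finset.mem_of_mem_erase hq') hcond
    refine ⟨hlt, Finset.mem_erase.mpr ⟨?_, hmemE⟩⟩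
    intro hEq
    have e1 := congrArg Prod.fst hEq
    have e2 := congrArg Prod.snd hEq
    simp only at e1 e2
    have h1 := hmax q (Finset.mem_of_mem_erase hq)
    have h2 := (hRp.1 q (Finset.mem_of_mem_erase hq)).2.1
    have : q.1 = p.1 ∧ q.2 = p.2 := by omega
    exact (Finset.mem_erase.mp hq).1 (Prod.ext this.1 this.2)

lemma not_mem_dseg {n : ℕ} {E : Finset (ℕ × ℕ)} (hRp : Rp n E) {p q : ℕ × ℕ}
    (hq : q ∈ E) (hne : q ≠ p) (hmax : ∀ r ∈ E, r.2 - r.1 ≤ p.2 - p.1) :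
    p ∉ dseg q.1 q.2 := by
  have h2 := (hRp.1 q hq).2.1
  rw [mem_dseg h2]
  have h1 := hmax q hq
  rintro (⟨e1, e2, e3⟩ | ⟨e1, e2, e3⟩)
  · have : q.1 = p.1 ∧ q.2 = p.2 := by omega
    exact hne (Prod.ext this.1 this.2)
  · omega

lemma erase_IsXE {n : ℕ} {a : ℕ → ℕ} {E : Finset (ℕ × ℕ)} {x : ℕ × ℕ → ℝ}
    (hRp : Rp n E) (hx : IsXE n a E x) {p : ℕ × ℕ} (hp : p ∈ E)
    (hmax : ∀ q ∈ E, q.2 - q.1 ≤ p.2 - p.1) :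
    IsXE n a (E.erase p) (Function.update x p 0) := by
  classical
  constructor
  · intro q hq
    by_cases hqp : q = p
    · rw [hqp, Function.update_self]
    · rw [Function.update_of_ne hqp]
      exact hx.1 q (fun hqE => hq (Finset.mem_erase.mpr ⟨hqp, hqE⟩))
  · intro q hq
    have hqE := Finset.mem_of_mem_erase hq
    have hqp := (Finset.mem_erase.mp hq).1
    have hnp := not_mem_dseg hRp hqE hqp hmax
    have : Sval (Function.update x p 0) (dseg q.1 q.2) = Sval x (dseg q.1 q.2) := by
      unfold Sval
      congr 1
      exact List.map_congr_left (fun r hr =>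
        Function.update_of_ne (fun h => hnp (by rw [← h]; exact hr)) _ _)
    rw [this]
    exact hx.2 q hqE

lemma main_lemma (n : ℕ) (a : ℕ → ℕ) :
    ∀ (l : List (ℕ × ℕ)) (E : Finset (ℕ × ℕ)) (x : ℕ × ℕ → ℝ),
      Rp n E → IsXE n a E x → l.Nodup → (∀ p, p ∈ l ↔ p ∈ E) → SortedByLength l →
      ∀ c : ℕ,
        ((∑ q ∈ E.filter (fun q => q.1 = c), x q) - (∑ q ∈ E.filter (fun q => q.2 = c), x q)
          = (lamwt n a c : ℝ) - (lamwt n a ((segSwapProd l)⁻¹ c) : ℝ))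
        ∧ ((E.filter (fun q => q.1 = c)).Nonempty →
            c ≤ (segSwapProd l)⁻¹ c ∧ ∃ q ∈ E, q.1 = c ∧ (segSwapProd l)⁻¹ c ≤ q.2)
        ∧ ((E.filter (fun q => q.2 = c)).Nonempty →
            (segSwapProd l)⁻¹ c ≤ c ∧ ∃ q ∈ E, q.2 = c ∧ q.1 ≤ (segSwapProd l)⁻¹ c) := by
  classical
  intro l
  induction l with
  | nil =>
    intro E x hRp hx hnd hmem hsort c
    have hE : E = ∅ := by
      ext q
      simp only [Finset.notMem_empty, iff_false]
      intro hq
      simpa using (hmem q).2 hq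
    subst hE
    simp [segSwapProd_nil]
  | cons p l ih =>
    intro E x hRp hx hnd hmem hsort c
    have hpE : p ∈ E := (hmem p).1 (List.mem_cons_self)
    have hvp := hRp.1 p hpE
    have hij : p.1 < p.2 := hvp.2.1
    have hsl := List.pairwise_cons.mp hsort
    have hmax : ∀ q ∈ E, q.2 - q.1 ≤ p.2 - p.1 := by
      intro q hq
      rcases List.mem_cons.mp ((hmem q).2 hq) with h | h
      · rw [h]
      · exact hsl.1 q h
    set E' := E.erase p with hE'
    set x' := Function.update x p 0 with hx'def
    have hpl : p ∉ l := (List.nodup_cons.mp hnd).1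
    have hnp : ∀ q ∈ E', q ≠ p := fun q hq => (Finset.mem_erase.mp hq).1
    have hmem' : ∀ q, q ∈ l ↔ q ∈ E' := by
      intro q
      constructor
      · intro hq
        exact Finset.mem_erase.mpr ⟨fun h => hpl (h ▸ hq),
          (hmem q).1 (List.mem_cons_of_mem _ hq)⟩
      · intro hq
        rcases List.mem_cons.mp ((hmem q).2 (Finset.mem_of_mem_erase hq)) with h | h
        · exact absurd h (hnp q hq)
        · exact h
    have hRp' : Rp n E' := erase_Rp hRp hpE hmax
    have hxE' : IsXE n a E' x' := erase_IsXE hRp hx hpE hmax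
    have ihE := ih E' x' hRp' hxE' (List.nodup_cons.mp hnd).2 hmem' hsl.2
    have hxx' : ∀ s : Finset (ℕ × ℕ), (∀ q ∈ s, q ≠ p) →
        ∑ q ∈ s, x' q = ∑ q ∈ s, x q :=
      fun s hs => Finset.sum_congr rfl fun q hq => Function.update_of_ne (hs q hq) _ _
    have hLne : ∀ c', c' ≠ p.1 →
        E.filter (fun q => q.1 = c') = E'.filter (fun q => q.1 = c') := by
      intro c' hc'
      ext q
      simp only [Finset.mem_filter, Finset.mem_erase, hE']
      constructor
      · rintro ⟨h1, h2⟩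
        exact ⟨⟨fun h => hc' (by rw [← h2, h]), h1⟩, h2⟩
      · rintro ⟨⟨_, h1⟩, h2⟩
        exact ⟨h1, h2⟩
    have hRne : ∀ c', c' ≠ p.2 →
        E.filter (fun q => q.2 = c') = E'.filter (fun q => q.2 = c') := by
      intro c' hc'
      ext q
      simp only [Finset.mem_filter, Finset.mem_erase, hE']
      constructor
      · rintro ⟨h1, h2⟩
        exact ⟨⟨fun h => hc' (by rw [← h2, h]), h1⟩, h2⟩
      · rintro ⟨⟨_, h1⟩, h2⟩
        exact ⟨h1, h2⟩
    have hLp : E.filter (fun q => q.1 = p.1) = insert p (E'.filter (fun q => q.1 = p.1)) := by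
      ext q
      simp only [Finset.mem_filter, Finset.mem_insert, Finset.mem_erase, hE']
      constructor
      · rintro ⟨h1, h2⟩
        by_cases hqp : q = p
        · exact Or.inl hqp
        · exact Or.inr ⟨⟨hqp, h1⟩, h2⟩
      · rintro (rfl | ⟨⟨_, h1⟩, h2⟩)
        · exact ⟨hpE, rfl⟩
        · exact ⟨h1, h2⟩
    have hRp2 : E.filter (fun q => q.2 = p.2) = insert p (E'.filter (fun q => q.2 = p.2)) := by
      ext q
      simp only [Finset.mem_filter, Finset.mem_insert, Finset.mem_erase, hE']
      constructor
      · rintro ⟨h1, h2⟩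
        by_cases hqp : q = p
        · exact Or.inl hqp
        · exact Or.inr ⟨⟨hqp, h1⟩, h2⟩
      · rintro (rfl | ⟨⟨_, h1⟩, h2⟩)
        · exact ⟨hpE, rfl⟩
        · exact ⟨h1, h2⟩
    have hRe : E.filter (fun q => q.2 = p.1) = ∅ := by
      rw [Finset.filter_eq_empty_iff]
      intro q hq h2
      exact no_touch hRp hq hpE h2
    have hLe : E.filter (fun q => q.1 = p.2) = ∅ := by
      rw [Finset.filter_eq_empty_iff]
      intro q hq h1
      exact no_touch hRp hpE hq h1.symm
    have hRe' : E'.filter (fun q => q.2 = p.1) = ∅ := by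
      rw [Finset.filter_eq_empty_iff]
      intro q hq h2
      exact no_touch hRp (Finset.mem_of_mem_erase hq) hpE h2
    have hLe' : E'.filter (fun q => q.1 = p.2) = ∅ := by
      rw [Finset.filter_eq_empty_iff]
      intro q hq h1
      exact no_touch hRp hpE (Finset.mem_of_mem_erase hq) h1.symm
    have hpnL : p ∉ E'.filter (fun q => q.1 = p.1) :=
      fun h => (Finset.mem_erase.mp (Finset.mem_filter.mp h).1).1 rfl
    have hpnR : p ∉ E'.filter (fun q => q.2 = p.2) :=
      fun h => (Finset.mem_erase.mp (Finset.mem_filter.mp h).1).1 rfl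
    have hkey := key_eq hRp hx hpE hmax
    have hw : (segSwapProd (p :: l))⁻¹ c = (segSwapProd l)⁻¹ (Equiv.swap p.1 p.2 c) := by
      rw [segSwapProd_cons, mul_inv_rev, Equiv.Perm.mul_apply, Equiv.swap_inv]
    have hcvL : ∀ c' : ℕ, ∑ q ∈ E'.filter (fun q => q.1 = c'), x' q
        = ∑ q ∈ E'.filter (fun q => q.1 = c'), x q :=
      fun c' => hxx' _ fun q hq => hnp q (Finset.mem_filter.mp hq).1
    have hcvR : ∀ c' : ℕ, ∑ q ∈ E'.filter (fun q => q.2 = c'), x' q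
        = ∑ q ∈ E'.filter (fun q => q.2 = c'), x q :=
      fun c' => hxx' _ fun q hq => hnp q (Finset.mem_filter.mp hq).1
    by_cases hc1 : c = p.1
    · -- c = p.1
      subst hc1
      rw [hw, Equiv.swap_apply_left]
      set d2 := (segSwapProd l)⁻¹ p.2 with hd2
      have ih2 := ihE p.2
      have hA2 : ∑ q ∈ E'.filter (fun q => q.2 = p.2), x q
          = (lamwt n a d2 : ℝ) - (lamwt n a p.2 : ℝ) := by
        have h0 := ih2.1
        rw [hLe', Finset.sum_empty] at h0
        linarith [hcvR p.2]
      refine ⟨?_, ?_, ?_⟩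
      · rw [hLp, Finset.sum_insert hpnL, hRe, Finset.sum_empty]
        linarith [hkey, hA2]
      · intro _
        by_cases hS : (E'.filter (fun q => q.2 = p.2)).Nonempty
        · obtain ⟨hle, q, hqE', hq2, hq1⟩ := ih2.2.2 hS
          have hqv := (hRp'.1 q hqE').2.1
          have hqm := hmax q (Finset.mem_of_mem_erase hqE')
          have hqne : q.1 ≠ p.1 := fun h => hnp q hqE' (Prod.ext h hq2)
          exact ⟨by omega, p, hpE, rfl, by omega⟩
        · have hfix : d2 = p.2 := by
            apply segSwapProd_inv_fix
            intro q hq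
            have hqE' := (hmem' q).1 hq
            constructor
            · intro h
              exact absurd (Finset.mem_filter.mpr ⟨hqE', h⟩) (by rw [hLe']; simp)
            · intro h
              exact hS ⟨q, Finset.mem_filter.mpr ⟨hqE', h⟩⟩
          exact ⟨by omega, p, hpE, rfl, by omega⟩
      · intro h
        rw [hRe] at h
        exact absurd h (by simp)
    · by_cases hc2 : c = p.2
      · -- c = p.2
        subst hc2
        rw [hw, Equiv.swap_apply_right]
        set d1 := (segSwapProd l)⁻¹ p.1 with hd1
        have ih1 := ihE p.1
        have hA1 : ∑ q ∈ E'.filter (fun q => q.1 = p.1), x q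
            = (lamwt n a p.1 : ℝ) - (lamwt n a d1 : ℝ) := by
          have h0 := ih1.1
          rw [hRe', Finset.sum_empty] at h0
          linarith [hcvL p.1]
        refine ⟨?_, ?_, ?_⟩
        · rw [hRp2, Finset.sum_insert hpnR, hLe, Finset.sum_empty]
          linarith [hkey, hA1]
        · intro h
          rw [hLe] at h
          exact absurd h (by simp)
        · intro _
          by_cases hS : (E'.filter (fun q => q.1 = p.1)).Nonempty
          · obtain ⟨hle, q, hqE', hq1, hq2⟩ := ih1.2.1 hS
            have hqv := (hRp'.1 q hqE').2.1
            have hqm := hmax q (Finset.mem_of_mem_erase hqE')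
            have hqne : q.2 ≠ p.2 := fun h => hnp q hqE' (Prod.ext hq1 h)
            exact ⟨by omega, p, hpE, rfl, by omega⟩
          · have hfix : d1 = p.1 := by
              apply segSwapProd_inv_fix
              intro q hq
              have hqE' := (hmem' q).1 hq
              constructor
              · intro h
                exact hS ⟨q, Finset.mem_filter.mpr ⟨hqE', h⟩⟩
              · intro h
                exact absurd (Finset.mem_filter.mpr ⟨hqE', h⟩) (by rw [hRe']; simp)
            exact ⟨by omega, p, hpE, rfl, by omega⟩
      · -- c ∉ {p.1, p.2}
        rw [hw, Equiv.swap_apply_of_ne_of_ne hc1 hc2]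
        have ihc := ihE c
        rw [hLne c hc1, hRne c hc2]
        refine ⟨by linarith [ihc.1, hcvL c, hcvR c], ?_, ?_⟩
        · intro h
          obtain ⟨h1, q, hq, h2, h3⟩ := ihc.2.1 h
          exact ⟨h1, q, Finset.mem_of_mem_erase hq, h2, h3⟩
        · intro h
          obtain ⟨h1, q, hq, h2, h3⟩ := ihc.2.2 h
          exact ⟨h1, q, Finset.mem_of_mem_erase hq, h2, h3⟩

/-- `2·Σ x(E)_{i,j} = Σ_k |λ_k - λ_{w(E)(k)}|`. -/
theorem degree_of_xE (n : ℕ) (hn : 2 ≤ n) (a : ℕ → ℕ)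
    (E : Finset (ℕ × ℕ)) (hE : Rp n E) (x : ℕ × ℕ → ℝ) (hx : IsXE n a E x)
    (l : List (ℕ × ℕ)) (hnd : l.Nodup) (hmem : ∀ p, p ∈ l ↔ p ∈ E)
    (hsort : SortedByLength l) :
    2 * ∑ p ∈ validPairs n, x p =
      ∑ k ∈ Finset.Icc 1 n, |(lamwt n a k : ℝ) - (lamwt n a (segSwapProd l k) : ℝ)| := by
  classical
  have hvalE := hE.1
  have hbounds : ∀ q ∈ l, 1 ≤ q.1 ∧ q.1 ≤ n ∧ 1 ≤ q.2 ∧ q.2 ≤ n := by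
    intro q hq
    obtain ⟨ha, hb, hc⟩ := hvalE q ((hmem q).1 hq)
    exact ⟨ha, by omega, by omega, hc⟩
  have hmain := main_lemma n a l E x hE hx hnd hmem hsort
  have hper : ∀ c : ℕ, |(lamwt n a c : ℝ) - (lamwt n a ((segSwapProd l)⁻¹ c) : ℝ)|
      = (∑ q ∈ E.filter (fun q => q.1 = c), x q)
        + (∑ q ∈ E.filter (fun q => q.2 = c), x q) := by
    intro c
    by_cases hL : (E.filter (fun q => q.1 = c)).Nonempty
    · have hRemp : E.filter (fun q => q.2 = c) = ∅ := by
        rw [Finset.filter_eq_empty_iff]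
        intro q hq h2
        obtain ⟨r, hr⟩ := hL
        have hr' := Finset.mem_filter.mp hr
        exact no_touch hE hq hr'.1 (h2.trans hr'.2.symm)
      have hA := (hmain c).1
      have hB := (hmain c).2.1 hL
      rw [hRemp, Finset.sum_empty] at hA ⊢
      rw [abs_of_nonneg]
      · linarith
      · have h1 : (lamwt n a ((segSwapProd l)⁻¹ c) : ℝ) ≤ (lamwt n a c : ℝ) :=
          Nat.cast_le.mpr (lamwt_antitone n a hB.1)
        linarith
    · by_cases hR : (E.filter (fun q => q.2 = c)).Nonempty
      · have hA := (hmain c).1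
        have hB := (hmain c).2.2 hR
        have hLemp : E.filter (fun q => q.1 = c) = ∅ :=
          Finset.not_nonempty_iff_eq_empty.mp hL
        rw [hLemp, Finset.sum_empty] at hA ⊢
        rw [abs_of_nonpos]
        · linarith
        · have h1 : (lamwt n a c : ℝ) ≤ (lamwt n a ((segSwapProd l)⁻¹ c) : ℝ) :=
            Nat.cast_le.mpr (lamwt_antitone n a hB.1)
          linarith
      · have hLemp := Finset.not_nonempty_iff_eq_empty.mp hL
        have hRemp := Finset.not_nonempty_iff_eq_empty.mp hR
        have hfix : (segSwapProd l)⁻¹ c = c := by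
          apply segSwapProd_inv_fix
          intro q hq
          have hqE := (hmem q).1 hq
          constructor
          · intro h
            exact absurd (Finset.mem_filter.mpr ⟨hqE, h⟩) (by rw [hLemp]; simp)
          · intro h
            exact absurd (Finset.mem_filter.mpr ⟨hqE, h⟩) (by rw [hRemp]; simp)
        rw [hfix, hLemp, hRemp]
        simp
  have hsub : E ⊆ validPairs n := by
    intro q hq
    obtain ⟨ha, hb, hc⟩ := hvalE q hq
    simp only [validPairs, Finset.mem_filter, Finset.mem_product, Finset.mem_Icc]
    exact ⟨⟨⟨ha, by omega⟩, by omega, hc⟩, hb⟩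
  have h1 : ∑ p ∈ validPairs n, x p = ∑ p ∈ E, x p :=
    (Finset.sum_subset hsub (fun q _ hq => hx.1 q hq)).symm
  have h2 : ∑ k ∈ Finset.Icc 1 n, |(lamwt n a k : ℝ) - (lamwt n a (segSwapProd l k) : ℝ)|
      = ∑ c ∈ Finset.Icc 1 n, |(lamwt n a c : ℝ) - (lamwt n a ((segSwapProd l)⁻¹ c) : ℝ)| := by
    refine Finset.sum_nbij' (i := fun k => segSwapProd l k) (j := fun c => (segSwapProd l)⁻¹ c) ?_ ?_ ?_ ?_ ?_
    · intro k hk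
      show segSwapProd l k ∈ Finset.Icc 1 n
      rcases segSwapProd_range (n := n) hbounds k with h | h
      · rwa [h]
      · simp only [Finset.mem_Icc]
        exact ⟨h.2.2.1, h.2.2.2⟩
    · intro c hc
      show (segSwapProd l)⁻¹ c ∈ Finset.Icc 1 n
      simp only [Finset.mem_Icc] at hc ⊢
      exact segSwapProd_inv_range hbounds hc
    · intro k _
      exact Equiv.Perm.inv_eq_iff_eq.mpr rfl
    · intro c _
      exact Equiv.Perm.eq_inv_iff_eq.mp rfl
    · intro k _
      show _ = |(lamwt n a (segSwapProd l k) : ℝ)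
        - (lamwt n a ((segSwapProd l)⁻¹ (segSwapProd l k)) : ℝ)|
      rw [show (segSwapProd l)⁻¹ (segSwapProd l k) = k from Equiv.Perm.inv_eq_iff_eq.mpr rfl, abs_sub_comm]
  have h3 : ∑ c ∈ Finset.Icc 1 n, ∑ q ∈ E.filter (fun q => q.1 = c), x q
      = ∑ q ∈ E, x q := by
    apply Finset.sum_fiberwise_of_maps_to
    intro q hq
    obtain ⟨ha, hb, hc⟩ := hvalE q hq
    simp only [Finset.mem_Icc]
    exact ⟨ha, by omega⟩
  have h4 : ∑ c ∈ Finset.Icc 1 n, ∑ q ∈ E.filter (fun q => q.2 = c), x q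
      = ∑ q ∈ E, x q := by
    apply Finset.sum_fiberwise_of_maps_to
    intro q hq
    obtain ⟨ha, hb, hc⟩ := hvalE q hq
    simp only [Finset.mem_Icc]
    exact ⟨by omega, hc⟩
  have h5 : ∑ c ∈ Finset.Icc 1 n, |(lamwt n a c : ℝ) - (lamwt n a ((segSwapProd l)⁻¹ c) : ℝ)|
      = ∑ c ∈ Finset.Icc 1 n, ((∑ q ∈ E.filter (fun q => q.1 = c), x q)
        + (∑ q ∈ E.filter (fun q => q.2 = c), x q)) :=
    Finset.sum_congr rfl fun c _ => hper c
  rw [h1, h2, h5, Finset.sum_add_distrib, h3, h4]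
  ring
end

section
/- Let λ be regular and let x be a simple vertex of P_λ. Then for every Dyck path d with S(x,d) = M(λ,d) and every (i,j) which is a peak or a valley of d, one has x_{i,j} > 0. -/
open Finset

/-- `Z(x)`: the valid pairs where the coordinate of `x` vanishes. -/
def Zset (n : ℕ) (x : ℕ × ℕ → ℝ) : Set (ℕ × ℕ) :=
  {p | ValidPair n p ∧ x p = 0}

/-- `D(x)`: the Dyck paths where the defining inequality of `P_λ` is an equality at `x`. -/
def Dset (n : ℕ) (a : ℕ → ℕ) (x : ℕ × ℕ → ℝ) : Set (List (ℕ × ℕ)) :=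
  {d | IsDyckPath n d ∧ Sval x d = (Mval a d : ℝ)}

/-- The integer coefficient vectors of the linear forms `x ↦ x_{i,j}` for `(i,j) ∈ Z(x)`
and `x ↦ S(x,d)` for `d ∈ D(x)`. -/
def simpleForms (n : ℕ) (a : ℕ → ℕ) (x : ℕ × ℕ → ℝ) :
    ↥(Zset n x) ⊕ ↥(Dset n a x) → (↥(validPairs n) → ℤ) :=
  Sum.elim (fun p q => if q.1 = p.1 then 1 else 0)
           (fun d q => (List.count q.1 d.1 : ℤ))

/-- `x` is a simple vertex of `P_λ`: it is a vertex, it satisfies exactly `n(n-1)/2` of the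
defining constraints with equality, and the corresponding integer coefficient vectors form a
`ℤ`-basis of `ℤ^{n(n-1)/2}` (i.e. the tangent cone is simplicial and unimodular). -/
def IsSimpleVertex (n : ℕ) (a : ℕ → ℕ) (x : ℕ × ℕ → ℝ) : Prop :=
  x ∈ Set.extremePoints ℝ (FFLV n a) ∧
  Nat.card ↥(Zset n x) + Nat.card ↥(Dset n a x) = n * (n - 1) / 2 ∧
  LinearIndependent ℤ (simpleForms n a x) ∧
  Submodule.span ℤ (Set.range (simpleForms n a x)) = ⊤

section Aux

lemma step_sum {p q : ℕ × ℕ} (h : PathStep p q) : p.1 + p.2 + 1 = q.1 + q.2 := by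
  rcases h with h | h <;> subst h <;> simp <;> omega

lemma step_fst {p q : ℕ × ℕ} (h : PathStep p q) : p.1 ≤ q.1 := by
  rcases h with h | h <;> subst h <;> simp

lemma dyck_pairwise_sum {n : ℕ} {d : List (ℕ × ℕ)} (hd : IsDyckPath n d) :
    List.Pairwise (fun p q : ℕ × ℕ => p.1 + p.2 < q.1 + q.2) d := by
  haveI : IsTrans (ℕ × ℕ) (fun p q : ℕ × ℕ => p.1 + p.2 < q.1 + q.2) :=
    ⟨fun a b c h1 h2 => lt_trans h1 h2⟩
  exact List.isChain_iff_pairwise.mp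
    ((hd.2.2.2.2).imp (fun {a b} h => by have := step_sum h; omega))

lemma dyck_pairwise_fst {n : ℕ} {d : List (ℕ × ℕ)} (hd : IsDyckPath n d) :
    List.Pairwise (fun p q : ℕ × ℕ => p.1 ≤ q.1) d := by
  haveI : IsTrans (ℕ × ℕ) (fun p q : ℕ × ℕ => p.1 ≤ q.1) :=
    ⟨fun a b c h1 h2 => le_trans h1 h2⟩
  exact List.isChain_iff_pairwise.mp ((hd.2.2.2.2).imp (fun {a b} h => step_fst h))

lemma mem_eq_of_sum_eq {n : ℕ} {d : List (ℕ × ℕ)} (hd : IsDyckPath n d) {p q : ℕ × ℕ}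
    (hp : p ∈ d) (hq : q ∈ d) (h : p.1 + p.2 = q.1 + q.2) : p = q := by
  by_contra hne
  have hpw := (List.pairwise_iff_getElem).mp (dyck_pairwise_sum hd)
  obtain ⟨i, hi, rfl⟩ := List.getElem_of_mem hp
  obtain ⟨j, hj, rfl⟩ := List.getElem_of_mem hq
  rcases lt_trichotomy i j with hij | rfl | hij
  · exact absurd h (ne_of_lt (hpw i j hi hj hij))
  · exact hne rfl
  · exact absurd h.symm (ne_of_lt (hpw j i hj hi hij))

lemma dyck_decomp {n : ℕ} {d : List (ℕ × ℕ)} (hd : IsDyckPath n d) {p b c : ℕ × ℕ}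
    (hp : p ∈ d) (hb : b ∈ d) (hc : c ∈ d)
    (hsb : b.1 + b.2 + 1 = p.1 + p.2) (hsc : p.1 + p.2 + 1 = c.1 + c.2) :
    ∃ A B, d = A ++ b :: p :: c :: B := by
  obtain ⟨k, hk, hdk⟩ := List.getElem_of_mem hp
  obtain ⟨m, hm, hdm⟩ := List.getElem_of_mem hb
  obtain ⟨l, hl, hdl⟩ := List.getElem_of_mem hc
  have hpw := (List.pairwise_iff_getElem).mp (dyck_pairwise_sum hd)
  have hmk : m < k := by
    rcases lt_trichotomy m k with h | h | h
    · exact h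
    · exfalso; subst h; rw [hdk] at hdm; subst hdm; omega
    · exfalso; have := hpw k m hk hm h; rw [hdk, hdm] at this; omega
  have hkl : k < l := by
    rcases lt_trichotomy k l with h | h | h
    · exact h
    · exfalso; subst h; rw [hdl] at hdk; subst hdk; omega
    · exfalso; have := hpw l k hl hk h; rw [hdk, hdl] at this; omega
  obtain ⟨k', rfl⟩ : ∃ k', k = k' + 1 := ⟨k - 1, by omega⟩
  have hlen2 : k' + 2 < d.length := by omega
  have hch := List.isChain_iff_getElem.mp hd.2.2.2.2
  have hstep1 : PathStep d[k'] d[k' + 1] := by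
    have := hch k' (by omega); simpa using this
  have hstep2 : PathStep d[k' + 1] d[k' + 2] := by
    have := hch (k' + 1) (by omega); simpa using this
  have hb' : d[k'] = b := by
    apply mem_eq_of_sum_eq hd (List.getElem_mem _) hb
    have h1 := step_sum hstep1
    rw [hdk] at h1; omega
  have hc' : d[k' + 2] = c := by
    apply mem_eq_of_sum_eq hd (List.getElem_mem _) hc
    have h2 := step_sum hstep2
    rw [hdk] at h2; omega
  refine ⟨d.take k', d.drop (k' + 3), ?_⟩
  conv_lhs => rw [← List.take_append_drop k' d]
  rw [List.drop_eq_getElem_cons (by omega), List.drop_eq_getElem_cons (by omega),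
      List.drop_eq_getElem_cons (by omega), hb', hdk, hc']

lemma li_contra4 {ι : Type*} {M : Type*} [AddCommGroup M] [Module ℤ M] {v : ι → M}
    (li : LinearIndependent ℤ v) (i₁ i₂ i₃ i₄ : ι)
    (h12 : i₁ ≠ i₂) (h13 : i₁ ≠ i₃) (h14 : i₁ ≠ i₄)
    (h23 : i₂ ≠ i₃) (h24 : i₂ ≠ i₄) (h34 : i₃ ≠ i₄)
    (hrel : v i₁ + v i₄ = v i₂ + v i₃) : False := by
  classical
  rw [linearIndependent_iff'] at li
  set g : ι → ℤ := fun i =>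
    if i = i₁ then 1 else if i = i₂ then -1 else if i = i₃ then -1 else 1 with hg
  have g1 : g i₁ = 1 := by simp [hg]
  have g2 : g i₂ = -1 := by simp [hg, h12.symm]
  have g3 : g i₃ = -1 := by simp [hg, h13.symm, h23.symm]
  have g4 : g i₄ = 1 := by simp [hg, h14.symm, h24.symm, h34.symm]
  have key := li {i₁, i₂, i₃, i₄} g (by
    rw [show ({i₁, i₂, i₃, i₄} : Finset ι) = insert i₁ (insert i₂ (insert i₃ {i₄})) from rfl,
        Finset.sum_insert (by simp [h12, h13, h14]),
        Finset.sum_insert (by simp [h23, h24]),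
        Finset.sum_insert (by simp [h34]), Finset.sum_singleton,
        g1, g2, g3, g4]; linear_combination (norm := module) hrel) i₁ (by simp)
  rw [g1] at key
  exact one_ne_zero key

lemma li_contra3 {ι : Type*} {M : Type*} [AddCommGroup M] [Module ℤ M] {v : ι → M}
    (li : LinearIndependent ℤ v) (i₁ i₂ i₃ i₄ : ι)
    (h12 : i₁ ≠ i₂) (h13 : i₁ ≠ i₃) (h14 : i₁ ≠ i₄)
    (h23 : i₂ ≠ i₃) (h24 : i₂ ≠ i₄) (h34 : i₃ ≠ i₄)
    (hrel : v i₁ = v i₂ + v i₃ + v i₄) : False := by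
  classical
  rw [linearIndependent_iff'] at li
  set g : ι → ℤ := fun i =>
    if i = i₁ then 1 else if i = i₂ then -1 else if i = i₃ then -1 else -1 with hg
  have g1 : g i₁ = 1 := by simp [hg]
  have g2 : g i₂ = -1 := by simp [hg, h12.symm]
  have g3 : g i₃ = -1 := by simp [hg, h13.symm, h23.symm]
  have g4 : g i₄ = -1 := by simp [hg, h14.symm, h24.symm, h34.symm]
  have key := li {i₁, i₂, i₃, i₄} g (by
    rw [show ({i₁, i₂, i₃, i₄} : Finset ι) = insert i₁ (insert i₂ (insert i₃ {i₄})) from rfl,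
        Finset.sum_insert (by simp [h12, h13, h14]),
        Finset.sum_insert (by simp [h23, h24]),
        Finset.sum_insert (by simp [h34]), Finset.sum_singleton,
        g1, g2, g3, g4]; linear_combination (norm := module) hrel) i₁ (by simp)
  rw [g1] at key
  exact one_ne_zero key

end Aux

section Nondeg

lemma ite_flip {α β : Type*} [DecidableEq α] (u w : α) (a b : β) :
    (if u = w then a else b) = if w = u then a else b := by
  by_cases h : u = w
  · simp [h]
  · simp [h, Ne.symm h]

lemma sval_decomp (x : ℕ × ℕ → ℝ) (A B : List (ℕ × ℕ)) (b p c : ℕ × ℕ) :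
    Sval x (A ++ b :: p :: c :: B) = Sval x A + x b + x p + x c + Sval x B := by
  simp [Sval]; ring

lemma head?_decomp (A : List (ℕ × ℕ)) (b : ℕ × ℕ) (X Y : List (ℕ × ℕ)) :
    (A ++ b :: X).head? = (A ++ b :: Y).head? := by
  cases A <;> simp

lemma getLast?_decomp (A : List (ℕ × ℕ)) (b p c : ℕ × ℕ) (B : List (ℕ × ℕ)) :
    (A ++ b :: p :: c :: B).getLast? = (c :: B).getLast? := by
  rw [show A ++ b :: p :: c :: B = (A ++ [b, p]) ++ c :: B by simp,
      List.getLast?_append]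
  have : (c :: B).getLast? = some ((c :: B).getLast (by simp)) :=
    List.getLast?_eq_getLast (by simp)
  rw [this]; rfl

lemma chain_decomp {A : List (ℕ × ℕ)} {b p c : ℕ × ℕ} {B : List (ℕ × ℕ)}
    (h : List.Chain' PathStep (A ++ b :: p :: c :: B)) {p' : ℕ × ℕ}
    (h1 : PathStep b p') (h2 : PathStep p' c) :
    List.Chain' PathStep (A ++ b :: p' :: c :: B) := by
  change List.IsChain _ _ at h ⊢
  rw [List.isChain_append] at h ⊢
  obtain ⟨hA, hrest, hlink⟩ := h
  rw [List.isChain_cons_cons, List.isChain_cons_cons] at hrest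
  exact ⟨hA, by rw [List.isChain_cons_cons, List.isChain_cons_cons]; exact ⟨h1, h2, hrest.2.2⟩,
    by simpa using hlink⟩

lemma dyck_replace {n : ℕ} {d A B : List (ℕ × ℕ)} {b p c p' : ℕ × ℕ}
    (hdeq : d = A ++ b :: p :: c :: B) (hd : IsDyckPath n d)
    (hvp' : ValidPair n p') (hs1 : PathStep b p') (hs2 : PathStep p' c) :
    IsDyckPath n (A ++ b :: p' :: c :: B) := by
  obtain ⟨hne, hval, ⟨i0, hh⟩, ⟨i1, hl⟩, hch⟩ := hd
  rw [hdeq] at hval hh hl hch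
  refine ⟨by simp, ?_, ⟨i0, ?_⟩, ⟨i1, ?_⟩, chain_decomp hch hs1 hs2⟩
  · intro q hq
    simp only [List.mem_append, List.mem_cons] at hq
    rcases hq with h | h | h | h | h
    · exact hval q (by simp [h])
    · exact hval q (by simp [h])
    · exact h ▸ hvp'
    · exact hval q (by simp [h])
    · exact hval q (by simp [h])
  · rw [head?_decomp A b (p' :: c :: B) (p :: c :: B)]; exact hh
  · rw [getLast?_decomp]; rw [getLast?_decomp] at hl; exact hl

lemma mval_replace {a : ℕ → ℕ} {A B : List (ℕ × ℕ)} {b p c p' : ℕ × ℕ}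
    (hf1 : p.1 = b.1 ∨ p.1 = c.1) (hf2 : p'.1 = b.1 ∨ p'.1 = c.1) :
    Mval a (A ++ b :: p' :: c :: B) = Mval a (A ++ b :: p :: c :: B) := by
  unfold Mval
  congr 1
  ext k
  simp only [List.mem_toFinset, List.mem_map, List.mem_append, List.mem_cons]
  constructor
  · rintro ⟨q, hq, rfl⟩
    rcases hq with h | rfl | rfl | rfl | h
    · exact ⟨q, Or.inl h, rfl⟩
    · exact ⟨q, Or.inr (Or.inl rfl), rfl⟩
    · rcases hf2 with h2 | h2
      · exact ⟨b, Or.inr (Or.inl rfl), h2.symm⟩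
      · exact ⟨c, Or.inr (Or.inr (Or.inr (Or.inl rfl))), h2.symm⟩
    · exact ⟨q, Or.inr (Or.inr (Or.inr (Or.inl rfl))), rfl⟩
    · exact ⟨q, Or.inr (Or.inr (Or.inr (Or.inr h))), rfl⟩
  · rintro ⟨q, hq, rfl⟩
    rcases hq with h | rfl | rfl | rfl | h
    · exact ⟨q, Or.inl h, rfl⟩
    · exact ⟨q, Or.inr (Or.inl rfl), rfl⟩
    · rcases hf1 with h2 | h2
      · exact ⟨b, Or.inr (Or.inl rfl), h2.symm⟩
      · exact ⟨c, Or.inr (Or.inr (Or.inr (Or.inl rfl))), h2.symm⟩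
    · exact ⟨q, Or.inr (Or.inr (Or.inr (Or.inl rfl))), rfl⟩
    · exact ⟨q, Or.inr (Or.inr (Or.inr (Or.inr h))), rfl⟩

lemma nondeg_contra {n : ℕ} {a : ℕ → ℕ} {x : ℕ × ℕ → ℝ} (hx : IsSimpleVertex n a x)
    {d A B : List (ℕ × ℕ)} {b p c p' : ℕ × ℕ}
    (hdeq : d = A ++ b :: p :: c :: B)
    (hd : IsDyckPath n d) (heq : Sval x d = (Mval a d : ℝ))
    (hx0 : x p = 0) (hvp' : ValidPair n p')
    (hs1 : PathStep b p') (hs2 : PathStep p' c)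
    (hf1 : p.1 = b.1 ∨ p.1 = c.1) (hf2 : p'.1 = b.1 ∨ p'.1 = c.1)
    (hpne : p ≠ p') : False := by
  classical
  have hmem : x ∈ FFLV n a := hx.1.1
  set d' : List (ℕ × ℕ) := A ++ b :: p' :: c :: B with hd'
  have hd'dyck : IsDyckPath n d' := dyck_replace hdeq hd hvp' hs1 hs2
  have hM : Mval a d' = Mval a d := by rw [hdeq]; exact mval_replace hf1 hf2
  have hS : Sval x d' = Sval x d - x p + x p' := by
    rw [hdeq, hd', sval_decomp, sval_decomp]; ring
  have hle : Sval x d' ≤ (Mval a d' : ℝ) := hmem.2.2 d' hd'dyck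
  have hge0 : (0 : ℝ) ≤ x p' := hmem.2.1 p'
  have hp'0 : x p' = 0 := by
    rw [hS, heq, hx0, hM] at hle; linarith
  have heq' : Sval x d' = (Mval a d' : ℝ) := by
    rw [hS, heq, hx0, hM, hp'0]; ring
  have hvp : ValidPair n p := hd.2.1 p (by rw [hdeq]; simp)
  have hdD : d ∈ Dset n a x := ⟨hd, heq⟩
  have hd'D : d' ∈ Dset n a x := ⟨hd'dyck, heq'⟩
  have hpZ : p ∈ Zset n x := ⟨hvp, hx0⟩
  have hp'Z : p' ∈ Zset n x := ⟨hvp', hp'0⟩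
  have hdne : d ≠ d' := by
    intro h
    rw [hdeq, hd'] at h
    have h2 := List.append_cancel_left h
    simp only [List.cons.injEq] at h2
    exact hpne h2.2.1
  -- relation: v(d) + v(p') = v(d') + v(p)
  refine li_contra4 hx.2.2.1 (Sum.inr ⟨d, hdD⟩) (Sum.inr ⟨d', hd'D⟩)
    (Sum.inl ⟨p, hpZ⟩) (Sum.inl ⟨p', hp'Z⟩)
    (fun h => hdne (Subtype.ext_iff.mp (Sum.inr_injective h)))
    (by simp) (by simp) (by simp) (by simp)
    (fun h => hpne (Subtype.ext_iff.mp (Sum.inl_injective h))) ?_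
  funext q
  simp only [simpleForms, Sum.elim_inr, Sum.elim_inl, Pi.add_apply]
  rw [hdeq, hd']
  simp only [List.count_append, List.count_cons, beq_iff_eq]
  rw [ite_flip (q : ℕ × ℕ) p, ite_flip (q : ℕ × ℕ) p']
  by_cases h1 : p = (q : ℕ × ℕ) <;> by_cases h2 : p' = (q : ℕ × ℕ)
  · exact absurd (h1.trans h2.symm) hpne
  all_goals (simp [h1, h2]; try push_cast; try ring)

end Nondeg

/-- Lemma `nv`: at a simple vertex, every peak or valley of a tight Dyck path
has a strictly positive coordinate. -/
theorem simple_vertex_peak_valley_positive (n : ℕ) (hn : 2 ≤ n) (a : ℕ → ℕ)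
    (hreg : ∀ i ∈ Finset.Icc 1 (n - 1), 0 < a i)
    (x : ℕ × ℕ → ℝ) (hx : IsSimpleVertex n a x)
    (d : List (ℕ × ℕ)) (hd : IsDyckPath n d) (heq : Sval x d = (Mval a d : ℝ))
    (p : ℕ × ℕ) (hp : IsPeak d p ∨ IsValley d p) :
    0 < x p := by
  classical
  have hmem : x ∈ FFLV n a := hx.1.1
  by_contra hpos
  have hx0 : x p = 0 := le_antisymm (not_lt.mp hpos) (hmem.2.1 p)
  rcases hp with hpk | hvl
  · -- PEAK
    obtain ⟨hpd, hbmem, hcmem⟩ := hpk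
    have hvp : ValidPair n p := hd.2.1 p hpd
    have hvb : ValidPair n (p.1, p.2 - 1) := hd.2.1 _ hbmem
    have hvc : ValidPair n (p.1 + 1, p.2) := hd.2.1 _ hcmem
    obtain ⟨h1p, hlt, hle⟩ := hvp
    have hj2 : p.1 + 2 ≤ p.2 := by
      have := hvb.2.1; simp at this; omega
    obtain ⟨A, B, hdeq⟩ := dyck_decomp hd hpd hbmem hcmem (by simp; omega) (by simp; omega)
    by_cases hdeg : p.2 = p.1 + 2
    · -- degenerate peak: split the path in two
      set b : ℕ × ℕ := (p.1, p.2 - 1) with hbdef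
      set c : ℕ × ℕ := (p.1 + 1, p.2) with hcdef
      obtain ⟨hne0, hval, ⟨i0, hh⟩, ⟨i1, hl⟩, hch⟩ := id hd
      rw [hdeq] at hval hh hl hch
      have hchA := List.isChain_append.mp hch
      obtain ⟨hA, hrest, hlink⟩ := hchA
      have hd₁dyck : IsDyckPath n (A ++ [b]) := by
        refine ⟨by simp, ?_, ⟨i0, ?_⟩, ⟨p.1, ?_⟩, ?_⟩
        · intro q hq; apply hval
          simp only [List.mem_append, List.mem_cons, List.not_mem_nil, or_false] at hq ⊢
          tauto
        · rw [head?_decomp A b [] (p :: c :: B)]; exact hh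
        · rw [List.getLast?_concat]
          simp only [hbdef, Option.some.injEq, Prod.mk.injEq]
          refine ⟨trivial, ?_⟩
          omega
        · refine List.isChain_append.mpr ⟨hA, List.isChain_singleton _, ?_⟩
          intro u hu y hy
          simp only [List.head?_cons, Option.mem_def, Option.some.injEq] at hy
          subst hy
          exact hlink u hu b (by simp)
      have hd₂dyck : IsDyckPath n (c :: B) := by
        refine ⟨by simp, ?_, ⟨p.1 + 1, ?_⟩, ⟨i1, ?_⟩, ?_⟩
        · intro q hq; apply hval
          simp only [List.mem_append, List.mem_cons] at hq ⊢
          tauto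
        · simp only [List.head?_cons, hcdef, Option.some.injEq, Prod.mk.injEq]
          refine ⟨trivial, ?_⟩
          omega
        · rw [getLast?_decomp] at hl; exact hl
        · exact (List.isChain_cons_cons.mp (List.isChain_cons_cons.mp hrest).2).2
      -- Mval splits
      have hpwf := dyck_pairwise_fst hd
      rw [hdeq] at hpwf
      have hA_le : ∀ q ∈ A, q.1 ≤ p.1 :=
        fun q hq => (List.pairwise_append.mp hpwf).2.2 q hq b (by simp)
      have hB_ge : ∀ q ∈ B, p.1 + 1 ≤ q.1 := by
        have h1 := (List.pairwise_append.mp hpwf).2.1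
        have h2 := (List.pairwise_cons.mp (List.pairwise_cons.mp
          (List.pairwise_cons.mp h1).2).2).1
        exact h2
      have hdisj : Disjoint ((A ++ [b]).map Prod.fst).toFinset
          (((c :: B).map Prod.fst).toFinset) := by
        rw [Finset.disjoint_left]
        intro k h1 h2
        simp only [List.mem_toFinset, List.mem_map, List.mem_append, List.mem_cons,
          List.not_mem_nil, or_false] at h1 h2
        obtain ⟨q1, hq1, rfl⟩ := h1
        obtain ⟨q2, hq2, he2⟩ := h2
        have e1 : q1.1 ≤ p.1 := by
          rcases hq1 with h | rfl
          · exact hA_le q1 h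
          · simp [hbdef]
        have e2 : p.1 + 1 ≤ q2.1 := by
          rcases hq2 with rfl | h
          · simp [hcdef]
          · exact hB_ge q2 h
        omega
      have hunion : ((A ++ b :: p :: c :: B).map Prod.fst).toFinset =
          ((A ++ [b]).map Prod.fst).toFinset ∪ ((c :: B).map Prod.fst).toFinset := by
        ext k
        simp only [List.mem_toFinset, List.mem_map, List.mem_append, List.mem_cons,
          Finset.mem_union, List.not_mem_nil, or_false]
        constructor
        · rintro ⟨q, hq, rfl⟩
          rcases hq with h | rfl | rfl | rfl | h
          · exact Or.inl ⟨q, Or.inl h, rfl⟩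
          · exact Or.inl ⟨b, Or.inr rfl, rfl⟩
          · exact Or.inl ⟨b, Or.inr rfl, rfl⟩
          · exact Or.inr ⟨c, Or.inl rfl, rfl⟩
          · exact Or.inr ⟨q, Or.inr h, rfl⟩
        · rintro (⟨q, hq, rfl⟩ | ⟨q, hq, rfl⟩)
          · rcases hq with h | rfl
            · exact ⟨q, Or.inl h, rfl⟩
            · exact ⟨b, Or.inr (Or.inl rfl), rfl⟩
          · rcases hq with rfl | h
            · exact ⟨c, Or.inr (Or.inr (Or.inr (Or.inl rfl))), rfl⟩
            · exact ⟨q, Or.inr (Or.inr (Or.inr (Or.inr h))), rfl⟩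
      have hM : Mval a d = Mval a (A ++ [b]) + Mval a (c :: B) := by
        unfold Mval
        rw [hdeq, hunion, Finset.sum_union hdisj]
      -- Sval splits
      have e0 : Sval x d = Sval x A + x b + x p + x c + Sval x B := by
        rw [hdeq]; exact sval_decomp x A B b p c
      have e1 : Sval x (A ++ [b]) = Sval x A + x b := by simp [Sval]
      have e2 : Sval x (c :: B) = x c + Sval x B := by simp [Sval]
      have hle₁ : Sval x (A ++ [b]) ≤ (Mval a (A ++ [b]) : ℝ) := hmem.2.2 _ hd₁dyck
      have hle₂ : Sval x (c :: B) ≤ (Mval a (c :: B) : ℝ) := hmem.2.2 _ hd₂dyck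
      have hMr : (Mval a d : ℝ) = (Mval a (A ++ [b]) : ℝ) + (Mval a (c :: B) : ℝ) := by
        rw [hM]; push_cast; ring
      have heq₁ : Sval x (A ++ [b]) = (Mval a (A ++ [b]) : ℝ) := by
        rw [e1]; rw [e0, hx0] at heq; rw [e1] at hle₁; rw [e2] at hle₂; linarith [hMr ▸ heq]
      have heq₂ : Sval x (c :: B) = (Mval a (c :: B) : ℝ) := by
        rw [e2]; rw [e0, hx0] at heq; rw [e1] at hle₁; rw [e2] at hle₂; linarith [hMr ▸ heq]
      have hdD : d ∈ Dset n a x := ⟨hd, heq⟩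
      have hd1D : (A ++ [b]) ∈ Dset n a x := ⟨hd₁dyck, heq₁⟩
      have hd2D : (c :: B) ∈ Dset n a x := ⟨hd₂dyck, heq₂⟩
      have hpZ : p ∈ Zset n x := ⟨⟨h1p, hlt, hle⟩, hx0⟩
      have hne1 : d ≠ A ++ [b] := by
        intro h; rw [hdeq] at h
        have := congrArg List.length h
        simp only [List.length_append, List.length_cons, List.length_nil] at this
        omega
      have hne2 : d ≠ c :: B := by
        intro h; rw [hdeq] at h
        have := congrArg List.length h
        simp only [List.length_append, List.length_cons, List.length_nil] at this
        omega
      have hne12 : (A ++ [b] : List (ℕ × ℕ)) ≠ c :: B := by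
        intro h
        have hbmem₂ : b ∈ c :: B := h ▸ (by simp : b ∈ A ++ [b])
        have hpws := dyck_pairwise_sum hd
        rw [hdeq] at hpws
        have h1 := (List.pairwise_append.mp hpws).2.1
        have h2 := (List.pairwise_cons.mp h1).1
        rcases List.mem_cons.mp hbmem₂ with h' | h'
        · have := congrArg Prod.fst h'
          simp only [hbdef, hcdef] at this
          omega
        · have := h2 b (by simp [h'])
          omega
      refine li_contra3 hx.2.2.1 (Sum.inr ⟨d, hdD⟩) (Sum.inr ⟨A ++ [b], hd1D⟩)
        (Sum.inr ⟨c :: B, hd2D⟩) (Sum.inl ⟨p, hpZ⟩)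
        (fun h => hne1 (Subtype.ext_iff.mp (Sum.inr_injective h)))
        (fun h => hne2 (Subtype.ext_iff.mp (Sum.inr_injective h)))
        (by simp)
        (fun h => hne12 (Subtype.ext_iff.mp (Sum.inr_injective h)))
        (by simp) (by simp) ?_
      funext q
      simp only [simpleForms, Sum.elim_inr, Sum.elim_inl, Pi.add_apply]
      rw [hdeq]
      simp only [List.count_append, List.count_cons, List.count_nil, beq_iff_eq]
      rw [ite_flip (q : ℕ × ℕ) p]
      by_cases h1 : p = (q : ℕ × ℕ) <;> simp [h1] <;> push_cast <;> ring
    · -- nondegenerate peak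
      refine nondeg_contra hx hdeq hd heq hx0 (p' := (p.1 + 1, p.2 - 1))
        ⟨by omega, by simp; omega, by simp; omega⟩
        (Or.inl rfl) (Or.inr (by simp [Prod.ext_iff]; omega))
        (Or.inl rfl) (Or.inr rfl) ?_
      intro h
      have := congrArg Prod.fst h
      simp at this
  · -- VALLEY
    obtain ⟨hpd, hbmem, hcmem⟩ := hvl
    have hvp : ValidPair n p := hd.2.1 p hpd
    have hvb : ValidPair n (p.1 - 1, p.2) := hd.2.1 _ hbmem
    have hvc : ValidPair n (p.1, p.2 + 1) := hd.2.1 _ hcmem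
    obtain ⟨h1p, hlt, hle⟩ := hvp
    have hi2 : 2 ≤ p.1 := by
      have := hvb.1; simp at this; omega
    obtain ⟨A, B, hdeq⟩ := dyck_decomp hd hpd hbmem hcmem (by simp; omega) (by simp; omega)
    refine nondeg_contra hx hdeq hd heq hx0 (p' := (p.1 - 1, p.2 + 1))
      ⟨by simp; omega, by simp; omega, by simpa using hvc.2.2⟩
      (Or.inr rfl) (Or.inl (by simp [Prod.ext_iff]; omega))
      (Or.inr rfl) (Or.inl rfl) ?_
    intro h
    have := congrArg Prod.snd h
    simp at this
end

section
/- Let λ be regular and E ∈ R_p. Then x(E)_{i,j} > 0 for every [i,j] ∈ E; moreover, if d is a Dyck path with S(x(E),d) = M(λ,d), then every peak and every valley (i,j) of d satisfies [i,j] ∈ E. -/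
open Finset

/-! ### Auxiliary machinery -/

/-- `q` is a subsegment of `p` sharing an endpoint. -/
def SubSeg (q p : ℕ × ℕ) : Prop := (q.1 = p.1 ∨ q.2 = p.2) ∧ p.1 ≤ q.1 ∧ q.2 ≤ p.2

theorem SubSeg.refl (p : ℕ × ℕ) : SubSeg p p := ⟨Or.inl rfl, le_refl _, le_refl _⟩

/-- The greedy "winner" family `W_k`. -/
def Wmem (E : Finset (ℕ × ℕ)) (k : ℕ) (p : ℕ × ℕ) : Prop :=
  p ∈ E ∧ p.1 ≤ k ∧ k < p.2 ∧
    ∀ q : ℕ × ℕ, q.1 ≤ k → k < q.2 → (q.1 = p.1 ∨ q.2 = p.2) → p.1 ≤ q.1 → q.2 ≤ p.2 →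
      q ≠ p → ¬ Wmem E k q
termination_by p.2 - p.1
decreasing_by
  rename_i hq1 hq2 hshare hle1 hle2 hne
  have : q.1 ≠ p.1 ∨ q.2 ≠ p.2 := by
    by_contra hc; push_neg at hc; exact hne (Prod.ext hc.1 hc.2)
  omega

theorem Wmem_iff (E : Finset (ℕ × ℕ)) (k : ℕ) (p : ℕ × ℕ) :
    Wmem E k p ↔ (p ∈ E ∧ p.1 ≤ k ∧ k < p.2 ∧
    ∀ q : ℕ × ℕ, q.1 ≤ k → k < q.2 → (q.1 = p.1 ∨ q.2 = p.2) → p.1 ≤ q.1 → q.2 ≤ p.2 →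
      q ≠ p → ¬ Wmem E k q) := by
  rw [Wmem]

theorem Wmem.mem {E k p} (h : Wmem E k p) : p ∈ E := ((Wmem_iff E k p).mp h).1
theorem Wmem.le {E k p} (h : Wmem E k p) : p.1 ≤ k := ((Wmem_iff E k p).mp h).2.1
theorem Wmem.lt {E k p} (h : Wmem E k p) : k < p.2 := ((Wmem_iff E k p).mp h).2.2.1

/-- No winner strictly dominates another winner through `SubSeg`. -/
theorem Wkill {E k p q} (hp : Wmem E k p) (hq : Wmem E k q) (hs : SubSeg q p)
    (hne : q ≠ p) : False :=
  ((Wmem_iff E k p).mp hp).2.2.2 q hq.le hq.lt hs.1 hs.2.1 hs.2.2 hne hq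

/-- Existence of a winner below any segment of `E` containing `k`. -/
theorem Wexists {E : Finset (ℕ × ℕ)} {k : ℕ} {p : ℕ × ℕ}
    (hpE : p ∈ E) (h1 : p.1 ≤ k) (h2 : k < p.2) :
    ∃ w, Wmem E k w ∧ SubSeg w p := by
  by_cases h : Wmem E k p
  · exact ⟨p, h, SubSeg.refl p⟩
  · rw [Wmem_iff] at h
    have h' : ¬ ∀ q : ℕ × ℕ, q.1 ≤ k → k < q.2 → (q.1 = p.1 ∨ q.2 = p.2) → p.1 ≤ q.1 →
        q.2 ≤ p.2 → q ≠ p → ¬ Wmem E k q := fun hc => h ⟨hpE, h1, h2, hc⟩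
    push_neg at h'
    obtain ⟨q, hq1, hq2, hq3, hq4, hq5, hq6, hq7⟩ := h'
    exact ⟨q, hq7, hq3, hq4, hq5⟩

section WithRp

variable {n : ℕ} {E : Finset (ℕ × ℕ)}

theorem Rp.inter (hE : Rp n E) {p q : ℕ × ℕ} (hp : p ∈ E) (hq : q ∈ E)
    (h : max p.1 q.1 ≤ min p.2 q.2) :
    max p.1 q.1 < min p.2 q.2 ∧ (max p.1 q.1, min p.2 q.2) ∈ E := hE.2 p hp q hq h

theorem Rp.valid (hE : Rp n E) {p : ℕ × ℕ} (hp : p ∈ E) :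
    1 ≤ p.1 ∧ p.1 < p.2 ∧ p.2 ≤ n := hE.1 p hp

/-- Two distinct winners with crossing order are impossible. -/
theorem nest_aux (hE : Rp n E) {k : ℕ} {u v : ℕ × ℕ} (hu : Wmem E k u) (hv : Wmem E k v)
    (h1 : u.1 < v.1) (h2 : u.2 < v.2) : False := by
  have hint := hE.inter hu.mem hv.mem (by
    have := hv.le; have := hu.lt; omega)
  have hmax : max u.1 v.1 = v.1 := by omega
  have hmin : min u.2 v.2 = u.2 := by omega
  rw [hmax, hmin] at hint
  obtain ⟨hlt, hsE⟩ := hint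
  obtain ⟨w, hw, hws⟩ := Wexists hsE (show (v.1, u.2).1 ≤ k from hv.le)
    (show k < (v.1, u.2).2 from hu.lt)
  obtain ⟨hshare, hle1, hle2⟩ := hws
  simp only at hshare hle1 hle2
  rcases hshare with hl | hr
  · -- w shares left endpoint v.1 : kills v
    refine Wkill hv hw ⟨Or.inl hl, by omega, by omega⟩ ?_
    intro hwv; rw [hwv] at hle2; omega
  · -- w shares right endpoint u.2 : kills u
    refine Wkill hu hw ⟨Or.inr hr, by omega, by omega⟩ ?_
    intro hwu; rw [hwu] at hle1; omega

/-- Winners sharing an endpoint are equal. -/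
theorem nest_aux2 {E k} {u v : ℕ × ℕ} (hu : Wmem E k u) (hv : Wmem E k v)
    (hshare : u.1 = v.1 ∨ u.2 = v.2) (hle1 : v.1 ≤ u.1) (hle2 : u.2 ≤ v.2) : u = v := by
  by_contra hne
  exact Wkill hv hu ⟨hshare, hle1, hle2⟩ hne

/-- Structure of the winner family: distinct winners are strictly nested. -/
theorem Wnest (hE : Rp n E) {k : ℕ} {u v : ℕ × ℕ} (hu : Wmem E k u) (hv : Wmem E k v)
    (hne : u ≠ v) : (v.1 < u.1 ∧ u.2 < v.2) ∨ (u.1 < v.1 ∧ v.2 < u.2) := by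
  rcases lt_trichotomy u.1 v.1 with h1 | h1 | h1
  · rcases lt_trichotomy u.2 v.2 with h2 | h2 | h2
    · exact absurd (nest_aux hE hu hv h1 h2) not_false
    · exact absurd (nest_aux2 hv hu (Or.inr h2.symm) (le_of_lt h1) (le_of_eq h2.symm)).symm hne
    · exact Or.inr ⟨h1, h2⟩
  · rcases lt_trichotomy u.2 v.2 with h2 | h2 | h2
    · exact absurd (nest_aux2 hu hv (Or.inl h1) (le_of_eq h1.symm) (le_of_lt h2)) hne
    · exact absurd (Prod.ext h1 h2) hne
    · exact absurd (nest_aux2 hv hu (Or.inl h1.symm) (le_of_eq h1) (le_of_lt h2)).symm hne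
  · rcases lt_trichotomy u.2 v.2 with h2 | h2 | h2
    · exact Or.inl ⟨h1, h2⟩
    · exact absurd (nest_aux2 hu hv (Or.inr h2) (le_of_lt h1) (le_of_eq h2)) hne
    · exact absurd (nest_aux hE hv hu h1 h2) not_false

/-- Uniqueness of the winner below a fixed segment. -/
theorem Wuniq (hE : Rp n E) {k : ℕ} {p u v : ℕ × ℕ} (hu : Wmem E k u) (hv : Wmem E k v)
    (hus : SubSeg u p) (hvs : SubSeg v p) : u = v := by
  by_contra hne
  rcases Wnest hE hu hv hne with ⟨h1, h2⟩ | ⟨h1, h2⟩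
  · rcases hus.1 with h | h
    · have := hvs.2.1; omega
    · have := hvs.2.2; omega
  · rcases hvs.1 with h | h
    · have := hus.2.1; omega
    · have := hus.2.2; omega

end WithRp


section NEsec

variable {n : ℕ} {E : Finset (ℕ × ℕ)}

/-- Helper: to prove `Wmem E k p` it suffices to kill all proper `SubSeg` winners. -/
theorem Wmem_of_kill (hpE : p ∈ E) (h1 : p.1 ≤ k) (h2 : k < p.2)
    (hk : ∀ q, Wmem E k q → SubSeg q p → q ≠ p → False) : Wmem E k p := by
  rw [Wmem_iff]
  exact ⟨hpE, h1, h2, fun q hq1 hq2 hq3 hq4 hq5 hq6 hq7 => hk q hq7 ⟨hq3, hq4, hq5⟩ hq6⟩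

/-- Every element of `E` is a winner for some `k`. -/
theorem Wself (hE : Rp n E) : ∀ m (p : ℕ × ℕ), p.2 - p.1 ≤ m → p ∈ E →
    ∃ k, p.1 ≤ k ∧ k < p.2 ∧ Wmem E k p := by
  intro m
  induction m with
  | zero =>
    intro p hm hp
    have := hE.valid hp; omega
  | succ m ih =>
    intro p hm hp
    have hval := hE.valid hp
    classical
    set Bset := (Finset.Ioo p.1 p.2).filter (fun b => (p.1, b) ∈ E) with hBdef
    set Cset := (Finset.Ioo p.1 p.2).filter (fun c => (c, p.2) ∈ E) with hCdef
    set B' := if h : Bset.Nonempty then Bset.max' h else p.1 with hB'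
    set C' := if h : Cset.Nonempty then Cset.min' h else p.2 with hC'
    have hBmem : ∀ b ∈ Bset, p.1 < b ∧ b < p.2 ∧ (p.1, b) ∈ E := by
      intro b hb
      rw [hBdef, Finset.mem_filter, Finset.mem_Ioo] at hb
      exact ⟨hb.1.1, hb.1.2, hb.2⟩
    have hCmem : ∀ c ∈ Cset, p.1 < c ∧ c < p.2 ∧ (c, p.2) ∈ E := by
      intro c hc
      rw [hCdef, Finset.mem_filter, Finset.mem_Ioo] at hc
      exact ⟨hc.1.1, hc.1.2, hc.2⟩
    have hBrange : p.1 ≤ B' ∧ B' < p.2 := by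
      rw [hB']
      split
      · rename_i h
        have := hBmem _ (Bset.max'_mem h); omega
      · omega
    have hCrange : p.1 < C' ∧ C' ≤ p.2 := by
      rw [hC']
      split
      · rename_i h
        have := hCmem _ (Cset.min'_mem h); omega
      · omega
    have hKB : ∀ b, (p.1, b) ∈ E → b < p.2 → b ≤ B' := by
      intro b hb hb2
      have hv := hE.valid hb
      have hbB : b ∈ Bset := by
        rw [hBdef, Finset.mem_filter, Finset.mem_Ioo]
        exact ⟨⟨hv.2.1, hb2⟩, hb⟩
      rw [hB']
      rw [dif_pos ⟨b, hbB⟩]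
      exact Finset.le_max' _ _ hbB
    have hKC : ∀ c, (c, p.2) ∈ E → p.1 < c → C' ≤ c := by
      intro c hc hc2
      have hv := hE.valid hc
      have hcC : c ∈ Cset := by
        rw [hCdef, Finset.mem_filter, Finset.mem_Ioo]
        exact ⟨⟨hc2, hv.2.1⟩, hc⟩
      rw [hC']
      rw [dif_pos ⟨c, hcC⟩]
      exact Finset.min'_le _ _ hcC
    -- the two shapes of proper SubSeg elements of E
    have qform : ∀ q, q ∈ E → SubSeg q p → q ≠ p →
        (q = (p.1, q.2) ∧ p.1 < q.2 ∧ q.2 < p.2 ∧ (p.1, q.2) ∈ E) ∨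
        (q = (q.1, p.2) ∧ p.1 < q.1 ∧ q.1 < p.2 ∧ (q.1, p.2) ∈ E) := by
      intro q hq hs hne
      have hqv := hE.valid hq
      by_cases h1 : q.1 = p.1
      · left
        have hq2 : q.2 < p.2 := by
          rcases lt_or_eq_of_le hs.2.2 with h | h
          · exact h
          · exact absurd (Prod.ext h1 h) hne
        have hqe : q = (p.1, q.2) := Prod.ext h1 rfl
        exact ⟨hqe, by omega, hq2, by rwa [hqe] at hq⟩
      · right
        have h2 : q.2 = p.2 := by rcases hs.1 with h | h; exact absurd h h1; exact h
        have hq1 : p.1 < q.1 := lt_of_le_of_ne hs.2.1 (fun h => h1 h.symm)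
        refine ⟨Prod.ext rfl h2, hq1, by omega, ?_⟩
        have : q = (q.1, p.2) := Prod.ext rfl h2
        rwa [this] at hq
    by_cases hlt : B' < C'
    · -- direct winner at k = B'
      refine ⟨B', hBrange.1, by omega, Wmem_of_kill hp hBrange.1 (by omega) ?_⟩
      intro q hq hs hne
      rcases qform q hq.mem hs hne with ⟨hqe, h1, h2, h3⟩ | ⟨hqe, h1, h2, h3⟩
      · have := hq.lt
        have := hKB q.2 h3 h2
        omega
      · have := hq.le
        have := hKC q.1 h3 h1
        omega
    · -- both families nonempty, recurse into r = (C', B')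
      push_neg at hlt
      have hBne : Bset.Nonempty := by
        by_contra h
        rw [hB'] at hlt; rw [dif_neg h] at hlt; omega
      have hCne : Cset.Nonempty := by
        by_contra h
        rw [hC'] at hlt; rw [dif_neg h] at hlt
        have : B' < p.2 := hBrange.2
        omega
      have hBE : (p.1, B') ∈ E := by
        have : B' ∈ Bset := by rw [hB', dif_pos hBne]; exact Bset.max'_mem hBne
        exact (hBmem _ this).2.2
      have hCE : (C', p.2) ∈ E := by
        have : C' ∈ Cset := by rw [hC', dif_pos hCne]; exact Cset.min'_mem hCne
        exact (hCmem _ this).2.2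
      have hBmax : B' ∈ Bset := by rw [hB', dif_pos hBne]; exact Bset.max'_mem hBne
      have hCmin : C' ∈ Cset := by rw [hC', dif_pos hCne]; exact Cset.min'_mem hCne
      have hBIoo := hBmem _ hBmax
      have hCIoo := hCmem _ hCmin
      have hint := hE.inter hBE hCE (by simp only; omega)
      have hmax : max (p.1, B').1 (C', p.2).1 = C' := by simp only; omega
      have hmin : min (p.1, B').2 (C', p.2).2 = B' := by simp only; omega
      rw [hmax, hmin] at hint
      obtain ⟨hCB, hrE⟩ := hint
      obtain ⟨k, hk1, hk2, hkW⟩ := ih (C', B') (by simp only; omega) hrE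
      simp only at hk1 hk2
      refine ⟨k, by omega, by omega, Wmem_of_kill hp (by omega) (by omega) ?_⟩
      intro q hq hs hne
      rcases qform q hq.mem hs hne with ⟨hqe, h1, h2, h3⟩ | ⟨hqe, h1, h2, h3⟩
      · -- q = (p.1, f) with f = q.2
        have hkf : k < q.2 := hq.lt
        have hfB : q.2 ≤ B' := hKB q.2 h3 h2
        -- intersect q with r
        have hint2 := hE.inter h3 hrE (by simp only; omega)
        have hmax2 : max (p.1, q.2).1 (C', B').1 = C' := by simp only; omega
        have hmin2 : min (p.1, q.2).2 (C', B').2 = q.2 := by simp only; omega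
        rw [hmax2, hmin2] at hint2
        obtain ⟨hCf, hsE⟩ := hint2
        obtain ⟨w, hw, hws⟩ := Wexists hsE (show (C', q.2).1 ≤ k by simp only; omega)
          (show k < (C', q.2).2 by simp only; omega)
        obtain ⟨hshare, hwle1, hwle2⟩ := hws
        simp only at hshare hwle1 hwle2
        rcases hshare with hl | hr
        · -- w shares left endpoint C'
          by_cases hwr : w = (C', B')
          ·
            rw [hwr] at hwle2; simp only at hwle2
            have hfB' : q.2 = B' := le_antisymm hfB hwle2
            refine Wkill hq hkW ⟨Or.inr (by simp only; omega), ?_, ?_⟩ ?_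
            · rw [hqe]; simp only; omega
            · rw [hqe]; simp only; omega
            · intro hc
              have h5 := congrArg Prod.fst hc
              have h6 := congrArg Prod.fst hqe
              simp only at h5 h6; omega
          · refine Wkill hkW hw ⟨Or.inl (by simp only; omega), by simp only; omega,
              by simp only; omega⟩ hwr
        · -- w shares right endpoint q.2 : kills q
          refine Wkill hq hw ⟨Or.inr (by rw [hqe]; simp only; omega),
            by rw [hqe]; simp only; omega, by rw [hqe]; simp only; omega⟩ ?_
          intro hc; rw [hc, hqe] at hwle1; simp only at hwle1; omega
      · -- q = (g, p.2) with g = q.1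
        have hkg : q.1 ≤ k := hq.le
        have hgC : C' ≤ q.1 := hKC q.1 h3 h1
        have hint2 := hE.inter h3 hrE (by simp only; omega)
        have hmax2 : max (q.1, p.2).1 (C', B').1 = q.1 := by simp only; omega
        have hmin2 : min (q.1, p.2).2 (C', B').2 = B' := by simp only; omega
        rw [hmax2, hmin2] at hint2
        obtain ⟨hgB, hsE⟩ := hint2
        obtain ⟨w, hw, hws⟩ := Wexists hsE (show (q.1, B').1 ≤ k by simp only; omega)
          (show k < (q.1, B').2 by simp only; omega)
        obtain ⟨hshare, hwle1, hwle2⟩ := hws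
        simp only at hshare hwle1 hwle2
        rcases hshare with hl | hr
        · -- w shares left endpoint q.1 : kills q
          refine Wkill hq hw ⟨Or.inl (by rw [hqe]; simp only; omega),
            by rw [hqe]; simp only; omega, by rw [hqe]; simp only; omega⟩ ?_
          intro hc; rw [hc, hqe] at hwle2; simp only at hwle2; omega
        · -- w shares right endpoint B'
          by_cases hwr : w = (C', B')
          · rw [hwr] at hwle1; simp only at hwle1
            have hgC' : q.1 = C' := le_antisymm hwle1 hgC
            refine Wkill hq hkW ⟨Or.inl (by simp only; omega), ?_, ?_⟩ ?_
            · rw [hqe]; simp only; omega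
            · rw [hqe]; simp only; omega
            · intro hc
              have h5 := congrArg Prod.snd hc
              have h6 := congrArg Prod.snd hqe
              simp only at h5 h6; omega
          · refine Wkill hkW hw ⟨Or.inr (by simp only; omega), by simp only; omega,
              by simp only; omega⟩ hwr

end NEsec


section Ysec

open Classical in
/-- The candidate point: `y p = ∑ₖ aₖ · [p ∈ W k]`. -/
noncomputable def yv (E : Finset (ℕ × ℕ)) (a : ℕ → ℕ) (p : ℕ × ℕ) : ℝ :=
  ∑ k ∈ Finset.Ico p.1 p.2, if Wmem E k p then (a k : ℝ) else 0

theorem yv_nonneg (E : Finset (ℕ × ℕ)) (a : ℕ → ℕ) (p : ℕ × ℕ) : 0 ≤ yv E a p := by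
  apply Finset.sum_nonneg
  intro k _
  split
  · positivity
  · exact le_refl 0

theorem yv_off (E : Finset (ℕ × ℕ)) (a : ℕ → ℕ) {p : ℕ × ℕ} (hp : p ∉ E) :
    yv E a p = 0 := by
  apply Finset.sum_eq_zero
  intro k _
  rw [if_neg (fun hW => hp (Wmem.mem hW))]

theorem list_range_map_sum (f : ℕ → ℝ) (m : ℕ) :
    ((List.range m).map f).sum = ∑ t ∈ Finset.range m, f t := by
  induction m with
  | zero => simp
  | succ m ih =>
    rw [List.range_succ, List.map_append, List.sum_append, Finset.sum_range_succ, ih]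
    simp

theorem Sval_dseg (x : ℕ × ℕ → ℝ) {i j : ℕ} (hij : i < j) :
    Sval x (dseg i j) = (∑ l ∈ Finset.Ioc i j, x (i, l)) + ∑ c ∈ Finset.Ioo i j, x (c, j) := by
  unfold Sval dseg
  rw [List.map_append, List.sum_append, List.map_map, List.map_map,
    list_range_map_sum, list_range_map_sum]
  congr 1
  · rw [show Finset.Ioc i j = Finset.Ico (i + 1) (j + 1) by
      ext m; rw [Finset.mem_Ioc, Finset.mem_Ico]; omega]
    rw [Finset.sum_Ico_eq_sum_range]
    rw [show j + 1 - (i + 1) = j - i by omega]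
    rfl
  · rw [show Finset.Ioo i j = Finset.Ico (i + 1) j by
      ext m; rw [Finset.mem_Ioo, Finset.mem_Ico]; omega]
    rw [Finset.sum_Ico_eq_sum_range]
    rfl

variable {n : ℕ} {E : Finset (ℕ × ℕ)} {a : ℕ → ℕ}

/-- The defining equation holds for `yv`. -/
theorem yv_eq (hE : Rp n E) {p : ℕ × ℕ} (hp : p ∈ E) :
    ((∑ l ∈ Finset.Ioc p.1 p.2, yv E a (p.1, l)) +
      ∑ c ∈ Finset.Ioo p.1 p.2, yv E a (c, p.2)) = ∑ k ∈ Finset.Ico p.1 p.2, (a k : ℝ) := by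
  classical
  have hval := hE.valid hp
  have h1 : ∀ l ∈ Finset.Ioc p.1 p.2, yv E a (p.1, l) =
      ∑ k ∈ Finset.Ico p.1 p.2, if Wmem E k (p.1, l) then (a k : ℝ) else 0 := by
    intro l hl
    rw [Finset.mem_Ioc] at hl
    unfold yv
    apply Finset.sum_subset
    · intro k hk; rw [Finset.mem_Ico] at hk ⊢; simp only at hk; omega
    · intro k _ hnk
      rw [if_neg]
      intro hW
      exact hnk (Finset.mem_Ico.mpr ⟨hW.le, hW.lt⟩)
  have h2 : ∀ c ∈ Finset.Ioo p.1 p.2, yv E a (c, p.2) =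
      ∑ k ∈ Finset.Ico p.1 p.2, if Wmem E k (c, p.2) then (a k : ℝ) else 0 := by
    intro c hc
    rw [Finset.mem_Ioo] at hc
    unfold yv
    apply Finset.sum_subset
    · intro k hk; rw [Finset.mem_Ico] at hk ⊢; simp only at hk; omega
    · intro k _ hnk
      rw [if_neg]
      intro hW
      exact hnk (Finset.mem_Ico.mpr ⟨hW.le, hW.lt⟩)
  rw [Finset.sum_congr rfl h1, Finset.sum_congr rfl h2]
  rw [show (∑ l ∈ Finset.Ioc p.1 p.2, ∑ k ∈ Finset.Ico p.1 p.2,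
        if Wmem E k (p.1, l) then (a k : ℝ) else 0) =
      ∑ k ∈ Finset.Ico p.1 p.2, ∑ l ∈ Finset.Ioc p.1 p.2,
        if Wmem E k (p.1, l) then (a k : ℝ) else 0 from Finset.sum_comm]
  rw [show (∑ c ∈ Finset.Ioo p.1 p.2, ∑ k ∈ Finset.Ico p.1 p.2,
        if Wmem E k (c, p.2) then (a k : ℝ) else 0) =
      ∑ k ∈ Finset.Ico p.1 p.2, ∑ c ∈ Finset.Ioo p.1 p.2,
        if Wmem E k (c, p.2) then (a k : ℝ) else 0 from Finset.sum_comm]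
  rw [← Finset.sum_add_distrib]
  apply Finset.sum_congr rfl
  intro k hk
  rw [Finset.mem_Ico] at hk
  obtain ⟨w, hw, hws⟩ := Wexists hp hk.1 hk.2
  by_cases hcase : w.1 = p.1
  · have hwe : (p.1, w.2) = w := Prod.ext hcase.symm rfl
    have hfirst : (∑ l ∈ Finset.Ioc p.1 p.2, if Wmem E k (p.1, l) then (a k : ℝ) else 0)
        = (a k : ℝ) := by
      rw [Finset.sum_eq_single_of_mem w.2
        (Finset.mem_Ioc.mpr ⟨lt_of_le_of_lt hk.1 hw.lt, hws.2.2⟩) ?side]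
      · rw [hwe, if_pos hw]
      case side =>
        intro l hl hlne
        rw [if_neg]
        intro hW
        have := Wuniq (p := p) hE hW hw ⟨Or.inl rfl, le_refl _, (Finset.mem_Ioc.mp hl).2⟩ hws
        exact hlne (congrArg Prod.snd this)
    have hsecond : (∑ c ∈ Finset.Ioo p.1 p.2, if Wmem E k (c, p.2) then (a k : ℝ) else 0)
        = 0 := by
      apply Finset.sum_eq_zero
      intro c hc
      rw [Finset.mem_Ioo] at hc
      rw [if_neg]
      intro hW
      have := Wuniq (p := p) hE hW hw ⟨Or.inr rfl, le_of_lt hc.1, le_refl _⟩ hws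
      have := congrArg Prod.fst this
      simp only at this
      omega
    rw [hfirst, hsecond, add_zero]
  · have hcase2 : w.2 = p.2 := by rcases hws.1 with h | h; exact absurd h hcase; exact h
    have hwe : (w.1, p.2) = w := Prod.ext rfl hcase2.symm
    have hfirst : (∑ l ∈ Finset.Ioc p.1 p.2, if Wmem E k (p.1, l) then (a k : ℝ) else 0)
        = 0 := by
      apply Finset.sum_eq_zero
      intro l hl
      rw [Finset.mem_Ioc] at hl
      rw [if_neg]
      intro hW
      have := Wuniq (p := p) hE hW hw ⟨Or.inl rfl, le_refl _, hl.2⟩ hws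
      have := congrArg Prod.fst this
      simp only at this
      omega
    have hsecond : (∑ c ∈ Finset.Ioo p.1 p.2, if Wmem E k (c, p.2) then (a k : ℝ) else 0)
        = (a k : ℝ) := by
      rw [Finset.sum_eq_single_of_mem w.1
        (Finset.mem_Ioo.mpr ⟨lt_of_le_of_ne hws.2.1 (Ne.symm hcase), lt_of_le_of_lt hw.le hk.2⟩)
        ?side2]
      · rw [hwe, if_pos hw]
      case side2 =>
        intro c hc hcne
        rw [if_neg]
        intro hW
        have := Wuniq (p := p) hE hW hw ⟨Or.inr rfl, le_of_lt (Finset.mem_Ioo.mp hc).1, le_refl _⟩ hws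
        exact hcne (congrArg Prod.fst this)
    rw [hfirst, hsecond, zero_add]

end Ysec


section Xsec

variable {n : ℕ} {E : Finset (ℕ × ℕ)} {a : ℕ → ℕ} {x : ℕ × ℕ → ℝ}

theorem x_eq_yv (hn : 2 ≤ n) (hE : Rp n E) (hx : IsXE n a E x) : ∀ p, x p = yv E a p := by
  have key : ∀ m (p : ℕ × ℕ), p.2 - p.1 ≤ m → p ∈ E → x p = yv E a p := by
    intro m
    induction m with
    | zero => intro p hm hp; have := hE.valid hp; omega
    | succ m ih =>
      intro p hm hp
      have hval := hE.valid hp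
      have hxeq := hx.2 p hp
      rw [Sval_dseg x hval.2.1] at hxeq
      have hyeq := yv_eq (a := a) hE hp
      have hsplit : Finset.Ioc p.1 p.2 = insert p.2 (Finset.Ioo p.1 p.2) :=
        (Finset.Ioo_insert_right hval.2.1).symm
      have hnotmem : p.2 ∉ Finset.Ioo p.1 p.2 := by
        rw [Finset.mem_Ioo]; omega
      rw [hsplit, Finset.sum_insert hnotmem] at hxeq hyeq
      have hterm : ∀ q : ℕ × ℕ, q.2 - q.1 ≤ m → x q = yv E a q := by
        intro q hq
        by_cases hqE : q ∈ E
        · exact ih q hq hqE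
        · rw [hx.1 q hqE, yv_off E a hqE]
      have hS1 : (∑ l ∈ Finset.Ioo p.1 p.2, x (p.1, l)) =
          ∑ l ∈ Finset.Ioo p.1 p.2, yv E a (p.1, l) := by
        apply Finset.sum_congr rfl
        intro l hl
        rw [Finset.mem_Ioo] at hl
        exact hterm _ (by simp only; omega)
      have hS2 : (∑ c ∈ Finset.Ioo p.1 p.2, x (c, p.2)) =
          ∑ c ∈ Finset.Ioo p.1 p.2, yv E a (c, p.2) := by
        apply Finset.sum_congr rfl
        intro c hc
        rw [Finset.mem_Ioo] at hc
        exact hterm _ (by simp only; omega)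
      have hpe : (p.1, p.2) = p := Prod.mk.eta
      rw [hpe] at hxeq hyeq
      rw [hS1, hS2] at hxeq
      linarith
  intro p
  by_cases hp : p ∈ E
  · exact key (p.2 - p.1) p (le_refl _) hp
  · rw [hx.1 p hp, yv_off E a hp]

end Xsec


section Dyck

/-- Strict componentwise order along a Dyck path. -/
def Slt (p q : ℕ × ℕ) : Prop := p.1 ≤ q.1 ∧ p.2 ≤ q.2 ∧ p.1 + p.2 < q.1 + q.2

instance : IsTrans (ℕ × ℕ) Slt where
  trans a b c h1 h2 := ⟨le_trans h1.1 h2.1, le_trans h1.2.1 h2.2.1, by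
    have := h1.2.2; have := h2.2.2; omega⟩

theorem pathStep_slt {p q : ℕ × ℕ} (h : PathStep p q) : Slt p q := by
  rcases h with h | h <;> subst h <;>
    exact ⟨by dsimp only; omega, by dsimp only; omega, by dsimp only; omega⟩

theorem iv_chain : ∀ (t : List (ℕ × ℕ)) (h0 : ℕ × ℕ), List.Chain' PathStep (h0 :: t) →
    ∀ q, (h0 :: t).getLast? = some q → ∀ m, h0.1 ≤ m → m ≤ q.1 → ∃ r ∈ h0 :: t, r.1 = m := by
  intro t
  induction t with
  | nil =>
    intro h0 _ q hq m hm1 hm2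
    have hqe : q = h0 := by simpa using hq.symm
    subst hqe
    exact ⟨q, List.mem_cons_self, by omega⟩
  | cons h1 t' ih =>
    intro h0 hch q hq m hm1 hm2
    by_cases hm : m ≤ h0.1
    · exact ⟨h0, List.mem_cons_self, by omega⟩
    · have hstep := (List.isChain_cons_cons.mp hch).1
      have hch' := (List.isChain_cons_cons.mp hch).2
      have hq' : (h1 :: t').getLast? = some q := by
        rwa [List.getLast?_cons_cons] at hq
      have hm1' : h1.1 ≤ m := by
        rcases hstep with h | h <;> subst h <;> dsimp only <;> omega
      obtain ⟨r, hr, hre⟩ := ih h1 hch' q hq' m hm1' hm2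
      exact ⟨r, List.mem_cons_of_mem _ hr, hre⟩

end Dyck

/-- Lemma `lemma`: for regular `λ` and `E ∈ R_p`, all coordinates of `x(E)` on
`E` are positive, and peaks and valleys of tight Dyck paths belong to `E`. -/
theorem xE_positive_and_tight_paths (n : ℕ) (hn : 2 ≤ n) (a : ℕ → ℕ)
    (hreg : ∀ i ∈ Finset.Icc 1 (n - 1), 0 < a i)
    (E : Finset (ℕ × ℕ)) (hE : Rp n E) (x : ℕ × ℕ → ℝ) (hx : IsXE n a E x) :
    (∀ p ∈ E, 0 < x p) ∧
      ∀ d, IsDyckPath n d → Sval x d = (Mval a d : ℝ) →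
        ∀ p, IsPeak d p ∨ IsValley d p → p ∈ E := by
  classical
  have hxy := x_eq_yv hn hE hx
  constructor
  · -- positivity
    intro p hp
    rw [hxy p]
    obtain ⟨k, hk1, hk2, hkW⟩ := Wself hE (p.2 - p.1) p (le_refl _) hp
    have hval := hE.valid hp
    have hak : 0 < a k := hreg k (Finset.mem_Icc.mpr ⟨by omega, by omega⟩)
    have hbig : (a k : ℝ) ≤ yv E a p := by
      unfold yv
      have hs := Finset.single_le_sum (f := fun k' => if Wmem E k' p then (a k' : ℝ) else 0)
        (fun i _ => by split
                       · positivity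
                       · exact le_refl 0) (Finset.mem_Ico.mpr ⟨hk1, hk2⟩)
      rwa [if_pos hkW] at hs
    have hcast : (0 : ℝ) < (a k : ℝ) := by exact_mod_cast hak
    linarith
  · -- tight paths
    intro d hd hSM p hPV
    by_contra hpE
    obtain ⟨hdne, hdval, ⟨i1, hhead⟩, ⟨iN, hlast⟩, hchain⟩ := hd
    obtain ⟨ys, hys⟩ := List.getLast?_eq_some_iff.mp hlast
    obtain ⟨t0, ht0⟩ := List.head?_eq_some_iff.mp hhead
    have hlastmem : (iN, iN + 1) ∈ d := by
      rw [hys]; exact List.mem_append_right _ (List.mem_singleton_self _)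
    have hheadmem : (i1, i1 + 1) ∈ d := by
      rw [ht0]; exact List.mem_cons_self
    have hpairwise : d.Pairwise Slt :=
      List.isChain_iff_pairwise.mp (List.IsChain.imp (fun a b h => pathStep_slt h) hchain)
    have hcomp : ∀ q ∈ d, ∀ q' ∈ d, q = q' ∨ Slt q q' ∨ Slt q' q := by
      intro q hq q' hq'
      by_cases he : q = q'
      · exact Or.inl he
      · haveI : Std.Symm (fun u v : ℕ × ℕ => Slt u v ∨ Slt v u) := ⟨fun u v h => h.symm⟩
        refine Or.inr (List.Pairwise.forall (R := fun u v => Slt u v ∨ Slt v u)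
          (hpairwise.imp (fun h => Or.inl h)) hq hq' he)
    have hnodup : d.Nodup := hpairwise.imp (fun h => by
      intro he
      have := h.2.2
      rw [he] at this
      omega)
    have hheadle : ∀ q ∈ d, i1 ≤ q.1 ∧ i1 + 1 ≤ q.2 := by
      intro q hq
      have hp1 := hpairwise
      rw [ht0] at hp1 hq
      rcases List.mem_cons.mp hq with he | ht
      · rw [he]; exact ⟨le_refl _, le_refl _⟩
      · have hsl := (List.pairwise_cons.mp hp1).1 q ht
        exact ⟨hsl.1, hsl.2.1⟩
    have hlastge : ∀ q ∈ d, q.1 ≤ iN ∧ q.2 ≤ iN + 1 := by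
      intro q hq
      have hp2 := hpairwise
      rw [hys] at hp2 hq
      rcases List.mem_append.mp hq with ht | hl
      · have hsl := (List.pairwise_append.mp hp2).2.2 q ht (iN, iN + 1)
          (List.mem_singleton_self _)
        exact ⟨hsl.1, hsl.2.1⟩
      · rw [List.mem_singleton.mp hl]; exact ⟨le_refl _, le_refl _⟩
    have hi1n : 1 ≤ i1 ∧ i1 + 1 ≤ n := by
      have hv := hdval _ hheadmem
      exact ⟨hv.1, hv.2.2⟩
    have hiNn : 1 ≤ iN ∧ iN + 1 ≤ n := by
      have hv := hdval _ hlastmem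
      exact ⟨hv.1, hv.2.2⟩
    have hiv : ∀ m, i1 ≤ m → m ≤ iN → ∃ r ∈ d, r.1 = m := by
      intro m hm1 hm2
      have hchain0 : List.Chain' PathStep ((i1, i1 + 1) :: t0) := by rwa [ht0] at hchain
      have hlast0 : ((i1, i1 + 1) :: t0).getLast? = some (iN, iN + 1) := by
        rwa [ht0] at hlast
      obtain ⟨r, hr, hre⟩ := iv_chain t0 (i1, i1 + 1) hchain0 (iN, iN + 1) hlast0 m hm1 hm2
      exact ⟨r, by rwa [ht0], hre⟩
    have hMval : (d.map Prod.fst).toFinset = Finset.Icc i1 iN := by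
      ext k
      rw [List.mem_toFinset, List.mem_map, Finset.mem_Icc]
      constructor
      · rintro ⟨q, hq, rfl⟩
        exact ⟨(hheadle q hq).1, (hlastge q hq).1⟩
      · rintro ⟨h1, h2⟩
        obtain ⟨r, hr, hre⟩ := hiv k h1 h2
        exact ⟨r, hr, hre⟩
    have hform : Sval x d = ∑ k ∈ Finset.Icc i1 iN,
        (if ∃ q ∈ d.toFinset, Wmem E k q then (a k : ℝ) else 0) := by
      have hD : Sval x d = ∑ q ∈ d.toFinset, x q := (List.sum_toFinset x hnodup).symm
      rw [hD]
      have h1 : ∀ q ∈ d.toFinset, x q =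
          ∑ k ∈ Finset.Ico 1 n, (if Wmem E k q then (a k : ℝ) else 0) := by
        intro q hq
        have hv := hdval q (List.mem_toFinset.mp hq)
        have hv1 : 1 ≤ q.1 := hv.1
        have hv2 : q.1 < q.2 := hv.2.1
        have hv3 : q.2 ≤ n := hv.2.2
        rw [hxy q]
        unfold yv
        apply Finset.sum_subset
        · intro k hk
          rw [Finset.mem_Ico] at hk ⊢
          omega
        · intro k _ hnk
          rw [if_neg]
          intro hW
          exact hnk (Finset.mem_Ico.mpr ⟨hW.le, hW.lt⟩)
      rw [Finset.sum_congr rfl h1, Finset.sum_comm]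
      have h2 : ∀ k ∈ Finset.Ico 1 n,
          (∑ q ∈ d.toFinset, if Wmem E k q then (a k : ℝ) else 0) =
          if ∃ q ∈ d.toFinset, Wmem E k q then (a k : ℝ) else 0 := by
        intro k _
        by_cases hex : ∃ q ∈ d.toFinset, Wmem E k q
        · obtain ⟨q0, hq0, hq0W⟩ := hex
          rw [if_pos ⟨q0, hq0, hq0W⟩, Finset.sum_eq_single_of_mem q0 hq0, if_pos hq0W]
          intro q hq hne
          rw [if_neg]
          intro hW
          rcases hcomp q (List.mem_toFinset.mp hq) q0 (List.mem_toFinset.mp hq0) with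
            he | hlt | hlt
          · exact hne he
          · have h3 := hlt.1; have h4 := hlt.2.1
            rcases Wnest hE hW hq0W hne with ⟨a1, a2⟩ | ⟨a1, a2⟩ <;> omega
          · have h3 := hlt.1; have h4 := hlt.2.1
            rcases Wnest hE hW hq0W hne with ⟨a1, a2⟩ | ⟨a1, a2⟩ <;> omega
        · rw [if_neg hex]
          apply Finset.sum_eq_zero
          intro q hq
          rw [if_neg (fun hW => hex ⟨q, hq, hW⟩)]
      rw [Finset.sum_congr rfl h2]
      symm
      apply Finset.sum_subset
      · intro k hk
        rw [Finset.mem_Icc] at hk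
        rw [Finset.mem_Ico]
        omega
      · intro k _ hnk
        rw [Finset.mem_Icc] at hnk
        rw [if_neg]
        rintro ⟨q, hq, hW⟩
        have hh := (hheadle q (List.mem_toFinset.mp hq)).1
        have hl := (hlastge q (List.mem_toFinset.mp hq)).2
        have h5 := hW.le
        have h6 := hW.lt
        omega
    have hcov : ∀ k, i1 ≤ k → k ≤ iN → ∃ q ∈ d.toFinset, Wmem E k q := by
      have hMv : (Mval a d : ℝ) = ∑ k ∈ Finset.Icc i1 iN, (a k : ℝ) := by
        unfold Mval
        rw [hMval]
        exact Nat.cast_sum _ _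
      have heq : (∑ k ∈ Finset.Icc i1 iN,
          (if ∃ q ∈ d.toFinset, Wmem E k q then (a k : ℝ) else 0)) =
          ∑ k ∈ Finset.Icc i1 iN, (a k : ℝ) := by
        rw [← hform, hSM, hMv]
      have hle : ∀ k ∈ Finset.Icc i1 iN,
          (if ∃ q ∈ d.toFinset, Wmem E k q then (a k : ℝ) else 0) ≤ (a k : ℝ) := by
        intro k _
        split
        · exact le_refl _
        · positivity
      have hall := (Finset.sum_eq_sum_iff_of_le hle).mp heq
      intro k hk1 hk2
      have h := hall k (Finset.mem_Icc.mpr ⟨hk1, hk2⟩)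
      by_contra hnex
      rw [if_neg hnex] at h
      have hak : 0 < a k := hreg k (Finset.mem_Icc.mpr ⟨by omega, by omega⟩)
      have hcast : (0 : ℝ) < (a k : ℝ) := by exact_mod_cast hak
      rw [← h] at hcast
      exact lt_irrefl _ hcast
    -- the corner contradiction
    have corner : ∀ c1 c2 : ℕ × ℕ, c1 ∈ d → c2 ∈ d → c1.1 < c2.1 → c1.2 < c2.2 →
        (∀ q ∈ d, q ∈ E → (q.1 ≤ c1.1 ∧ q.2 ≤ c1.2) ∨ (c2.1 ≤ q.1 ∧ c2.2 ≤ q.2)) → False := by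
      intro c1 c2 hc1 hc2 h11 h22 hsplitq
      have hc1v := hdval _ hc1
      have hc2v := hdval _ hc2
      have hc1v2 : c1.1 < c1.2 := hc1v.2.1
      have hc2v2 : c2.1 < c2.2 := hc2v.2.1
      obtain ⟨w1, hw1D, hw1⟩ := hcov c1.1 (hheadle _ hc1).1 (hlastge _ hc1).1
      have hw1head : w1.1 ≤ c1.1 ∧ w1.2 ≤ c1.2 := by
        rcases hsplitq w1 (List.mem_toFinset.mp hw1D) hw1.mem with h | h
        · exact h
        · have := hw1.le; omega
      obtain ⟨w2, hw2D, hw2⟩ := hcov (c2.2 - 1)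
        (by have := (hheadle _ hc2).1; omega)
        (by have := (hlastge _ hc2).2; omega)
      have hw2tail : c2.1 ≤ w2.1 ∧ c2.2 ≤ w2.2 := by
        rcases hsplitq w2 (List.mem_toFinset.mp hw2D) hw2.mem with h | h
        · have := hw2.lt; omega
        · exact h
      set HS := d.toFinset.filter (fun q => q ∈ E ∧ q.1 ≤ c1.1 ∧ q.2 ≤ c1.2) with hHS
      set TS := d.toFinset.filter (fun q => q ∈ E ∧ c2.1 ≤ q.1 ∧ c2.2 ≤ q.2) with hTS
      have hw1HS : w1 ∈ HS := Finset.mem_filter.mpr ⟨hw1D, hw1.mem, hw1head.1, hw1head.2⟩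
      have hw2TS : w2 ∈ TS := Finset.mem_filter.mpr ⟨hw2D, hw2.mem, hw2tail.1, hw2tail.2⟩
      obtain ⟨r, hrHS, hrmax⟩ := Finset.exists_max_image HS (fun q => q.1 + q.2) ⟨w1, hw1HS⟩
      obtain ⟨u, huTS, humin⟩ := Finset.exists_min_image TS (fun q => q.1 + q.2) ⟨w2, hw2TS⟩
      have hrP := Finset.mem_filter.mp hrHS
      have huP := Finset.mem_filter.mp huTS
      have hrE : r ∈ E := hrP.2.1
      have huE : u ∈ E := huP.2.1
      have hr1 : r.1 ≤ c1.1 := hrP.2.2.1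
      have hr2 : r.2 ≤ c1.2 := hrP.2.2.2
      have hu1 : c2.1 ≤ u.1 := huP.2.2.1
      have hu2 : c2.2 ≤ u.2 := huP.2.2.2
      have hrd : r ∈ d := List.mem_toFinset.mp hrP.1
      have hud : u ∈ d := List.mem_toFinset.mp huP.1
      have hrv := hE.valid hrE
      have huv := hE.valid huE
      have hrup : ∀ q ∈ HS, q.1 ≤ r.1 ∧ q.2 ≤ r.2 := by
        intro q hq
        have hkey := hrmax q hq
        rcases hcomp q (List.mem_toFinset.mp (Finset.mem_filter.mp hq).1) r hrd with
          he | hlt | hlt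
        · exact he ▸ ⟨le_refl _, le_refl _⟩
        · exact ⟨hlt.1, hlt.2.1⟩
        · have := hlt.2.2; omega
      have hulow : ∀ q ∈ TS, u.1 ≤ q.1 ∧ u.2 ≤ q.2 := by
        intro q hq
        have hkey := humin q hq
        rcases hcomp q (List.mem_toFinset.mp (Finset.mem_filter.mp hq).1) u hud with
          he | hlt | hlt
        · exact he ▸ ⟨le_refl _, le_refl _⟩
        · have := hlt.2.2; omega
        · exact ⟨hlt.1, hlt.2.1⟩
      by_cases hcross : u.1 ≤ r.2
      · have hint := hE.inter hrE huE (by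
          rw [show max r.1 u.1 = u.1 by omega, show min r.2 u.2 = r.2 by omega]
          exact hcross)
        rw [show max r.1 u.1 = u.1 by omega, show min r.2 u.2 = r.2 by omega] at hint
        obtain ⟨hlt2, hsE⟩ := hint
        obtain ⟨k, hk1, hk2, hkW⟩ :=
          Wself hE ((u.1, r.2).2 - (u.1, r.2).1) (u.1, r.2) (le_refl _) hsE
        have hk1' : u.1 ≤ k := hk1
        have hk2' : k < r.2 := hk2
        obtain ⟨w, hwD, hwW⟩ := hcov k
          (by have := (hheadle _ hud).1; omega)
          (by have := (hlastge _ hrd).2; omega)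
        have hwd := List.mem_toFinset.mp hwD
        by_cases hws : w = (u.1, r.2)
        · rcases hsplitq w hwd hwW.mem with h | h
          · have h1' : w.1 ≤ c1.1 := h.1
            rw [hws] at h1'
            have : u.1 ≤ c1.1 := h1'
            omega
          · have h2' : c2.2 ≤ w.2 := h.2
            rw [hws] at h2'
            have : c2.2 ≤ r.2 := h2'
            omega
        · have hnn := Wnest hE hwW hkW hws
          rcases hsplitq w hwd hwW.mem with h | h
          · have hwHS : w ∈ HS := Finset.mem_filter.mpr ⟨hwD, hwW.mem, h.1, h.2⟩
            have hup := hrup w hwHS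
            rcases hnn with ⟨a1, a2⟩ | ⟨a1, a2⟩
            · have a1' : u.1 < w.1 := a1
              have := h.1; omega
            · have a2' : r.2 < w.2 := a2
              have := hup.2; omega
          · have hwTS : w ∈ TS := Finset.mem_filter.mpr ⟨hwD, hwW.mem, h.1, h.2⟩
            have hlow := hulow w hwTS
            rcases hnn with ⟨a1, a2⟩ | ⟨a1, a2⟩
            · have a2' : w.2 < r.2 := a2
              have := h.2; omega
            · have a1' : w.1 < u.1 := a1
              have := hlow.1; omega
      · push_neg at hcross
        obtain ⟨w, hwD, hwW⟩ := hcov r.2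
          (by have := (hheadle _ hrd).1; have := hrv.2.1; omega)
          (by have := (hlastge _ hud).1; omega)
        rcases hsplitq w (List.mem_toFinset.mp hwD) hwW.mem with h | h
        · have hwHS : w ∈ HS := Finset.mem_filter.mpr ⟨hwD, hwW.mem, h.1, h.2⟩
          have hup := hrup w hwHS
          have := hwW.lt
          omega
        · have hwTS : w ∈ TS := Finset.mem_filter.mpr ⟨hwD, hwW.mem, h.1, h.2⟩
          have hlow := hulow w hwTS
          have := hwW.le
          omega
    rcases hPV with hPk | hVl
    · obtain ⟨hpd, hpd1, hpd2⟩ := hPk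
      have hv1 := hdval _ hpd1
      have hv1' : p.1 < p.2 - 1 := hv1.2.1
      refine corner (p.1, p.2 - 1) (p.1 + 1, p.2) hpd1 hpd2 (by omega) (by omega) ?_
      intro q hqd hqE
      have hne1 : q ≠ p := fun he => hpE (he ▸ hqE)
      rcases hcomp q hqd p hpd with he | hlt | hlt
      · exact absurd he hne1
      · rcases hcomp q hqd (p.1, p.2 - 1) hpd1 with he2 | h2 | h2
        · subst he2; exact Or.inl ⟨le_refl _, le_refl _⟩
        · exact Or.inl ⟨h2.1, h2.2.1⟩
        · exfalso
          have b1 : p.1 ≤ q.1 := h2.1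
          have b2 : p.2 - 1 ≤ q.2 := h2.2.1
          have b3 : p.1 + (p.2 - 1) < q.1 + q.2 := h2.2.2
          have b4 := hlt.1
          have b5 := hlt.2.1
          have b6 := hlt.2.2
          omega
      · rcases hcomp q hqd (p.1 + 1, p.2) hpd2 with he2 | h2 | h2
        · subst he2; exact Or.inr ⟨le_refl _, le_refl _⟩
        · exfalso
          have b1 : q.1 ≤ p.1 + 1 := h2.1
          have b2 : q.2 ≤ p.2 := h2.2.1
          have b3 : q.1 + q.2 < p.1 + 1 + p.2 := h2.2.2
          have b4 := hlt.1
          have b5 := hlt.2.1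
          have b6 := hlt.2.2
          omega
        · exact Or.inr ⟨h2.1, h2.2.1⟩
    · obtain ⟨hpd, hpd1, hpd2⟩ := hVl
      have hv1 := hdval _ hpd1
      have hv1' : 1 ≤ p.1 - 1 := hv1.1
      have hvp := hdval _ hpd
      have hvp1 : 1 ≤ p.1 := hvp.1
      refine corner (p.1 - 1, p.2) (p.1, p.2 + 1) hpd1 hpd2 (by omega) (by omega) ?_
      intro q hqd hqE
      have hne1 : q ≠ p := fun he => hpE (he ▸ hqE)
      rcases hcomp q hqd p hpd with he | hlt | hlt
      · exact absurd he hne1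
      · rcases hcomp q hqd (p.1 - 1, p.2) hpd1 with he2 | h2 | h2
        · subst he2; exact Or.inl ⟨le_refl _, le_refl _⟩
        · exact Or.inl ⟨h2.1, h2.2.1⟩
        · exfalso
          have b1 : p.1 - 1 ≤ q.1 := h2.1
          have b2 : p.2 ≤ q.2 := h2.2.1
          have b3 : p.1 - 1 + p.2 < q.1 + q.2 := h2.2.2
          have b4 := hlt.1
          have b5 := hlt.2.1
          have b6 := hlt.2.2
          omega
      · rcases hcomp q hqd (p.1, p.2 + 1) hpd2 with he2 | h2 | h2
        · subst he2; exact Or.inr ⟨le_refl _, le_refl _⟩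
        · exfalso
          have b1 : q.1 ≤ p.1 := h2.1
          have b2 : q.2 ≤ p.2 + 1 := h2.2.1
          have b3 : q.1 + q.2 < p.1 + (p.2 + 1) := h2.2.2
          have b4 := hlt.1
          have b5 := hlt.2.1
          have b6 := hlt.2.2
          omega
        · exact Or.inr ⟨h2.1, h2.2.1⟩
end

section
/- The cardinality of R_s equals X_{n−1}, the (n−1)-st large Schröder number. -/
open Finset

/-- `E ∈ R_s`: a set of segments inside `[1,n]` such that the (nonempty) intersection of any
two of its segments coincides with one of the two segments. -/
def Rs (n : ℕ) (E : Finset (ℕ × ℕ)) : Prop :=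
  (∀ p ∈ E, ValidPair n p) ∧
  ∀ p ∈ E, ∀ q ∈ E, max p.1 q.1 ≤ min p.2 q.2 →
    (max p.1 q.1, min p.2 q.2) = p ∨ (max p.1 q.1, min p.2 q.2) = q

def seg (n : ℕ) : Finset (ℕ × ℕ) :=
  (Finset.Icc 1 n ×ˢ Finset.Icc 1 n).filter fun p => p.1 < p.2

def C (a b c d : ℕ) : Prop := b < c ∨ d < a ∨ (c ≤ a ∧ b ≤ d) ∨ (a ≤ c ∧ d ≤ b)

instance : ∀ a b c d, Decidable (C a b c d) := fun _ _ _ _ => by unfold C; infer_instance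

def good (E : Finset (ℕ × ℕ)) : Prop := ∀ p ∈ E, ∀ q ∈ E, C p.1 p.2 q.1 q.2

instance : DecidablePred good := fun E => by unfold good; infer_instance

def fam (n : ℕ) : Finset (Finset (ℕ × ℕ)) := (seg n).powerset.filter good
def famf (n : ℕ) : Finset (Finset (ℕ × ℕ)) :=
  (seg n).powerset.filter (fun E => good E ∧ (1,n) ∉ E)

lemma mem_seg {n : ℕ} {p : ℕ × ℕ} : p ∈ seg n ↔ 1 ≤ p.1 ∧ p.1 < p.2 ∧ p.2 ≤ n := by
  obtain ⟨a,b⟩ := p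
  simp [seg, Finset.mem_filter, Finset.mem_product]
  omega

lemma compat_iff {a b c d : ℕ} (hab : a < b) (hcd : c < d) :
    (max a c ≤ min b d → ((max a c, min b d) = (a,b) ∨ (max a c, min b d) = (c,d))) ↔
      C a b c d := by
  simp only [Prod.ext_iff, C]
  omega

lemma Rs_iff_mem_fam {n : ℕ} {E : Finset (ℕ × ℕ)} : Rs n E ↔ E ∈ fam n := by
  constructor
  · rintro ⟨hval, hpair⟩
    simp only [fam, Finset.mem_filter, Finset.mem_powerset]
    refine ⟨fun p hp => mem_seg.2 (hval p hp), fun p hp q hq => ?_⟩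
    have h1 := hval p hp
    have h2 := hval q hq
    exact (compat_iff h1.2.1 h2.2.1).1 (hpair p hp q hq)
  · intro h
    simp only [fam, Finset.mem_filter, Finset.mem_powerset] at h
    refine ⟨fun p hp => mem_seg.1 (h.1 hp), fun p hp q hq => ?_⟩
    have h1 := mem_seg.1 (h.1 hp)
    have h2 := mem_seg.1 (h.1 hq)
    exact (compat_iff h1.2.1 h2.2.1).2 (h.2 p hp q hq)

lemma card_Rs_eq (n : ℕ) : Nat.card {E : Finset (ℕ × ℕ) // Rs n E} = (fam n).card := by
  rw [← Nat.card_eq_finsetCard]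
  exact Nat.card_congr (Equiv.subtypeEquivRight (fun E => Rs_iff_mem_fam))

lemma good_subset {E F : Finset (ℕ × ℕ)} (h : F ⊆ E) (hE : good E) : good F :=
  fun p hp q hq => hE p (h hp) q (h hq)

lemma fam_one : (fam 1).card = 1 := by
  have : seg 1 = ∅ := by
    ext p; simp [mem_seg]; omega
  simp [fam, this, Finset.filter_singleton, good]

lemma fam_zero : (fam 0).card = 1 := by
  have : seg 0 = ∅ := by
    ext p; simp [mem_seg]; omega
  simp [fam, this, Finset.filter_singleton, good]

lemma good_insert_full {n : ℕ} {E : Finset (ℕ × ℕ)} (hE : E ⊆ seg n) (hg : good E) :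
    good (insert (1, n) E) := by
  intro p hp q hq
  simp only [Finset.mem_insert] at hp hq
  have key : ∀ r ∈ E, C r.1 r.2 1 n ∧ C 1 n r.1 r.2 := by
    intro r hr
    have := mem_seg.1 (hE hr)
    constructor
    · right; right; left; omega
    · right; right; right; omega
  rcases hp with rfl | hp <;> rcases hq with rfl | hq
  · right; right; left; omega
  · exact (key q hq).2
  · exact (key p hp).1
  · exact hg p hp q hq

lemma fam_double {n : ℕ} (hn : 2 ≤ n) : (fam n).card = 2 * (famf n).card := by
  classical
  have hsplit := Finset.card_filter_add_card_filter_not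
    (s := fam n) (p := fun E => (1, n) ∈ E)
  have h2 : (fam n).filter (fun E => ¬ (1, n) ∈ E) = famf n := by
    rw [fam, famf, Finset.filter_filter]
  have h1 : ((fam n).filter (fun E => (1, n) ∈ E)).card = (famf n).card := by
    apply Finset.card_nbij' (i := fun E => E.erase (1, n)) (j := fun F => insert (1, n) F)
    · intro E hE
      simp only [Finset.mem_coe, Finset.mem_filter, fam, famf, Finset.mem_powerset] at hE ⊢
      exact ⟨(Finset.erase_subset _ _).trans hE.1.1,
        good_subset (Finset.erase_subset _ _) hE.1.2,
        Finset.notMem_erase _ _⟩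
    · intro F hF
      simp only [Finset.mem_coe, Finset.mem_filter, fam, famf, Finset.mem_powerset] at hF ⊢
      refine ⟨⟨Finset.insert_subset (mem_seg.2 (by simp; omega)) hF.1, ?_⟩,
        Finset.mem_insert_self _ _⟩
      exact good_insert_full hF.1 hF.2.1
    · intro E hE
      simp only [Finset.mem_coe, Finset.mem_filter] at hE
      exact Finset.insert_erase hE.2
    · intro F hF
      simp only [Finset.mem_coe, Finset.mem_filter, famf, Finset.mem_powerset] at hF
      exact Finset.erase_insert hF.2.2
  rw [← hsplit, h2, h1]
  ring

def topJ (E : Finset (ℕ × ℕ)) : ℕ := (E.filter fun p => p.1 = 1).sup Prod.snd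

lemma le_topJ {E : Finset (ℕ × ℕ)} {p : ℕ × ℕ} (hp : p ∈ E) (h1 : p.1 = 1) :
    p.2 ≤ topJ E :=
  Finset.le_sup (f := Prod.snd) (Finset.mem_filter.2 ⟨hp, h1⟩)

lemma topJ_mem {E : Finset (ℕ × ℕ)} (h : topJ E ≠ 0) : (1, topJ E) ∈ E := by
  have hne : (E.filter fun p => p.1 = 1).Nonempty := by
    by_contra hh
    rw [Finset.not_nonempty_iff_eq_empty] at hh
    unfold topJ at h
    rw [hh] at h
    simp at h
  obtain ⟨p, hp, hsup⟩ := Finset.exists_mem_eq_sup _ hne Prod.snd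
  obtain ⟨hpE, hp1⟩ := Finset.mem_filter.1 hp
  have : (1, topJ E) = p := by
    unfold topJ
    rw [hsup, ← hp1]
  rw [this]
  exact hpE

lemma topJ_eq_zero_iff {E : Finset (ℕ × ℕ)} {m : ℕ} (hE : E ⊆ seg m) :
    topJ E = 0 ↔ ∀ p ∈ E, p.1 ≠ 1 := by
  constructor
  · intro h p hp h1
    have h2 := le_topJ hp h1
    have h3 := mem_seg.1 (hE hp)
    omega
  · intro h
    have : E.filter (fun p => p.1 = 1) = ∅ :=
      Finset.filter_eq_empty_iff.2 (fun {p} hp => h p hp)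
    unfold topJ
    rw [this]
    rfl

lemma good_image_up {E : Finset (ℕ × ℕ)} (k : ℕ) (hg : good E) :
    good (E.image fun p => (p.1 + k, p.2 + k)) := by
  intro p hp q hq
  obtain ⟨p₀, hp₀, rfl⟩ := Finset.mem_image.1 hp
  obtain ⟨q₀, hq₀, rfl⟩ := Finset.mem_image.1 hq
  have := hg p₀ hp₀ q₀ hq₀
  unfold C at *
  dsimp only at *
  omega

lemma good_image_down {E : Finset (ℕ × ℕ)} (k : ℕ) (hg : good E)
    (hb : ∀ p ∈ E, k < p.1) :
    good (E.image fun p => (p.1 - k, p.2 - k)) := by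
  intro p hp q hq
  obtain ⟨p₀, hp₀, rfl⟩ := Finset.mem_image.1 hp
  obtain ⟨q₀, hq₀, rfl⟩ := Finset.mem_image.1 hq
  have h1 := hg p₀ hp₀ q₀ hq₀
  have h2 := hb p₀ hp₀
  have h3 := hb q₀ hq₀
  unfold C at *
  dsimp only at *
  omega

lemma fiber_zero (n : ℕ) :
    ((fam (n + 1)).filter (fun E => topJ E = 0)).card = (fam n).card := by
  apply Finset.card_nbij' (i := fun E => E.image fun p => (p.1 - 1, p.2 - 1))
    (j := fun F => F.image fun p => (p.1 + 1, p.2 + 1))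
  · intro E hE
    obtain ⟨hEf, hE0⟩ := Finset.mem_filter.1 hE
    obtain ⟨hEsub, hEg⟩ := Finset.mem_filter.1 hEf
    rw [Finset.mem_powerset] at hEsub
    have hne1 := (topJ_eq_zero_iff hEsub).1 hE0
    have hb : ∀ p ∈ E, 1 < p.1 := by
      intro p hp
      have := mem_seg.1 (hEsub hp)
      have := hne1 p hp
      omega
    simp only [Finset.mem_coe, fam, Finset.mem_filter, Finset.mem_powerset]
    refine ⟨?_, good_image_down 1 hEg hb⟩
    intro p hp
    obtain ⟨p₀, hp₀, rfl⟩ := Finset.mem_image.1 hp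
    have h1 := mem_seg.1 (hEsub hp₀)
    have h2 := hb p₀ hp₀
    rw [mem_seg]
    simp only
    omega
  · intro F hF
    obtain ⟨hFsub, hFg⟩ := Finset.mem_filter.1 hF
    rw [Finset.mem_powerset] at hFsub
    have hsub : (F.image fun p => (p.1 + 1, p.2 + 1)) ⊆ seg (n + 1) := by
      intro p hp
      obtain ⟨p₀, hp₀, rfl⟩ := Finset.mem_image.1 hp
      have := mem_seg.1 (hFsub hp₀)
      rw [mem_seg]
      simp only
      omega
    rw [Finset.mem_coe, Finset.mem_filter]
    refine ⟨Finset.mem_filter.2 ⟨Finset.mem_powerset.2 hsub, good_image_up 1 hFg⟩, ?_⟩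
    rw [topJ_eq_zero_iff hsub]
    intro p hp
    obtain ⟨p₀, hp₀, rfl⟩ := Finset.mem_image.1 hp
    have := mem_seg.1 (hFsub hp₀)
    dsimp only
    omega
  · intro E hE
    obtain ⟨hEf, hE0⟩ := Finset.mem_filter.1 hE
    obtain ⟨hEsub, hEg⟩ := Finset.mem_filter.1 hEf
    rw [Finset.mem_powerset] at hEsub
    dsimp only
    rw [Finset.image_image]
    have : ∀ p ∈ E, ((fun p => ((p:ℕ×ℕ).1 + 1, p.2 + 1)) ∘ (fun p => (p.1 - 1, p.2 - 1))) p = id p := by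
      intro p hp
      have h1 := mem_seg.1 (hEsub hp)
      have h2 := (topJ_eq_zero_iff hEsub).1 hE0 p hp
      simp only [Function.comp, id]
      obtain ⟨a, b⟩ := p
      simp only at *
      rw [Prod.ext_iff]
      simp only
      omega
    rw [Finset.image_congr this, Finset.image_id]
  · intro F hF
    dsimp only
    rw [Finset.image_image]
    have : ∀ p ∈ F, ((fun p => ((p:ℕ×ℕ).1 - 1, p.2 - 1)) ∘ (fun p => (p.1 + 1, p.2 + 1))) p = id p := by
      intro p hp
      simp [Function.comp]
    rw [Finset.image_congr this, Finset.image_id]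

lemma mem_fiber_split {n j : ℕ} {E : Finset (ℕ × ℕ)} (hEsub : E ⊆ seg (n + 1))
    (hEg : good E) (hE0 : topJ E = j) (hj2 : 2 ≤ j) :
    (1, j) ∈ E ∧ ∀ p ∈ E, p.2 ≤ j ∨ j + 1 ≤ p.1 := by
  have hfull : (1, j) ∈ E := hE0 ▸ topJ_mem (by omega)
  refine ⟨hfull, fun p hp => ?_⟩
  have h1 := hEg p hp (1, j) hfull
  have h2 := mem_seg.1 (hEsub hp)
  by_cases hone : p.1 = 1
  · have h3 := le_topJ hp hone
    rw [hE0] at h3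
    left; omega
  · unfold C at h1; dsimp only at h1; omega

lemma fiber_j (n j : ℕ) (hj2 : 2 ≤ j) (hjn : j ≤ n + 1) :
    ((fam (n + 1)).filter (fun E => topJ E = j)).card
      = (famf j).card * (fam (n + 1 - j)).card := by
  rw [← Finset.card_product]
  apply Finset.card_nbij'
    (i := fun E => ((E.filter fun p => p.2 ≤ j).erase (1, j),
      (E.filter fun p => j + 1 ≤ p.1).image fun p => (p.1 - j, p.2 - j)))
    (j := fun FG => insert (1, j) (FG.1 ∪ FG.2.image fun p => (p.1 + j, p.2 + j)))
  · -- forward maps_to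
    intro E hE
    obtain ⟨hEf, hE0⟩ := Finset.mem_filter.1 hE
    obtain ⟨hEsub, hEg⟩ := Finset.mem_filter.1 hEf
    rw [Finset.mem_powerset] at hEsub
    rw [Finset.mem_coe, Finset.mem_product]
    constructor
    · simp only [famf, Finset.mem_filter, Finset.mem_powerset]
      refine ⟨?_, good_subset ((Finset.erase_subset _ _).trans (Finset.filter_subset _ _)) hEg,
        Finset.notMem_erase _ _⟩
      intro p hp
      obtain ⟨hne, hpf⟩ := Finset.mem_erase.1 hp
      obtain ⟨hpE, hple⟩ := Finset.mem_filter.1 hpf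
      have := mem_seg.1 (hEsub hpE)
      rw [mem_seg]; omega
    · simp only [fam, Finset.mem_filter, Finset.mem_powerset]
      constructor
      · intro p hp
        obtain ⟨p₀, hp₀, rfl⟩ := Finset.mem_image.1 hp
        obtain ⟨hpE, hpge⟩ := Finset.mem_filter.1 hp₀
        have := mem_seg.1 (hEsub hpE)
        rw [mem_seg]; dsimp only; omega
      · apply good_image_down j (good_subset (Finset.filter_subset _ _) hEg)
        intro p hp
        exact lt_of_lt_of_le (by omega) (Finset.mem_filter.1 hp).2
  · -- backward maps_to
    rintro ⟨F, G⟩ hFG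
    rw [Finset.mem_coe, Finset.mem_product] at hFG
    obtain ⟨hF, hG⟩ := hFG
    simp only [famf, Finset.mem_filter, Finset.mem_powerset] at hF
    obtain ⟨hFsub, hFg, hF1j⟩ := hF
    simp only [fam, Finset.mem_filter, Finset.mem_powerset] at hG
    obtain ⟨hGsub, hGg⟩ := hG
    have hFb : ∀ x ∈ F, 1 ≤ x.1 ∧ x.1 < x.2 ∧ x.2 ≤ j := fun x hx => mem_seg.1 (hFsub hx)
    have hUb : ∀ y ∈ G.image (fun p => ((p : ℕ × ℕ).1 + j, p.2 + j)),
        j + 1 ≤ y.1 ∧ y.1 < y.2 ∧ y.2 ≤ n + 1 := by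
      intro y hy
      obtain ⟨y₀, hy₀, rfl⟩ := Finset.mem_image.1 hy
      have := mem_seg.1 (hGsub hy₀)
      dsimp only; omega
    rw [Finset.mem_coe, Finset.mem_filter]
    refine ⟨Finset.mem_filter.2 ⟨Finset.mem_powerset.2 ?_, ?_⟩, ?_⟩
    · -- subset of seg (n+1)
      apply Finset.insert_subset (mem_seg.2 (by dsimp only; omega))
      apply Finset.union_subset
      · intro x hx
        have := hFb x hx
        rw [mem_seg]; omega
      · intro y hy
        have := hUb y hy
        rw [mem_seg]; omega
    · -- good
      intro p hp q hq
      simp only [Finset.mem_insert, Finset.mem_union] at hp hq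
      rcases hp with rfl | hp | hp <;> rcases hq with rfl | hq | hq
      · unfold C; dsimp only; omega
      · have := hFb q hq; unfold C; dsimp only; omega
      · have := hUb q (by exact hq); unfold C; dsimp only; omega
      · have := hFb p hp; unfold C; dsimp only; omega
      · exact hFg p hp q hq
      · have h1 := hFb p hp; have h2 := hUb q hq; unfold C; omega
      · have := hUb p (by exact hp); unfold C; dsimp only; omega
      · have h1 := hUb p hp; have h2 := hFb q hq; unfold C; omega
      · obtain ⟨p₀, hp₀, rfl⟩ := Finset.mem_image.1 hp
        obtain ⟨q₀, hq₀, rfl⟩ := Finset.mem_image.1 hq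
        have := hGg p₀ hp₀ q₀ hq₀
        unfold C at *; dsimp only at *; omega
    · -- topJ = j
      unfold topJ
      apply le_antisymm
      · apply Finset.sup_le
        intro y hy
        obtain ⟨hyE, hy1⟩ := Finset.mem_filter.1 hy
        simp only [Finset.mem_insert, Finset.mem_union] at hyE
        rcases hyE with rfl | hyF | hyU
        · rfl
        · exact (hFb y hyF).2.2
        · have := hUb y hyU; omega
      · exact Finset.le_sup (f := Prod.snd) (b := ((1, j) : ℕ × ℕ))
          (Finset.mem_filter.2 ⟨Finset.mem_insert_self _ _, rfl⟩)
  · -- left inverse : j' (i E) = E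
    intro E hE
    obtain ⟨hEf, hE0⟩ := Finset.mem_filter.1 hE
    obtain ⟨hEsub, hEg⟩ := Finset.mem_filter.1 hEf
    rw [Finset.mem_powerset] at hEsub
    obtain ⟨hfull, hsp⟩ := mem_fiber_split hEsub hEg hE0 hj2
    dsimp only
    have himg : ((E.filter fun p => j + 1 ≤ p.1).image (fun p => (p.1 - j, p.2 - j))).image
        (fun p => ((p : ℕ × ℕ).1 + j, p.2 + j)) = E.filter fun p => j + 1 ≤ p.1 := by
      rw [Finset.image_image]
      have : ∀ p ∈ E.filter fun p => j + 1 ≤ (p : ℕ × ℕ).1,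
          ((fun p => ((p : ℕ × ℕ).1 + j, p.2 + j)) ∘ (fun p => ((p : ℕ × ℕ).1 - j, p.2 - j))) p
            = id p := by
        intro p hp
        obtain ⟨hpE, hpge⟩ := Finset.mem_filter.1 hp
        have := mem_seg.1 (hEsub hpE)
        simp only [Function.comp, id]
        rw [Prod.ext_iff]; dsimp only; omega
      rw [Finset.image_congr this, Finset.image_id]
    rw [himg]
    ext x
    simp only [Finset.mem_insert, Finset.mem_union, Finset.mem_erase, Finset.mem_filter]
    constructor
    · rintro (rfl | ⟨hne, hxE, hle⟩ | ⟨hxE, hge⟩)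
      · exact hfull
      · exact hxE
      · exact hxE
    · intro hxE
      by_cases hx : x = (1, j)
      · exact Or.inl hx
      · rcases hsp x hxE with h | h
        · exact Or.inr (Or.inl ⟨hx, hxE, h⟩)
        · exact Or.inr (Or.inr ⟨hxE, h⟩)
  · -- right inverse : i (j' (F,G)) = (F,G)
    rintro ⟨F, G⟩ hFG
    rw [Finset.mem_coe, Finset.mem_product] at hFG
    obtain ⟨hF, hG⟩ := hFG
    simp only [famf, Finset.mem_filter, Finset.mem_powerset] at hF
    obtain ⟨hFsub, hFg, hF1j⟩ := hF
    simp only [fam, Finset.mem_filter, Finset.mem_powerset] at hG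
    obtain ⟨hGsub, hGg⟩ := hG
    have hFb : ∀ x ∈ F, 1 ≤ x.1 ∧ x.1 < x.2 ∧ x.2 ≤ j := fun x hx => mem_seg.1 (hFsub hx)
    have hGb : ∀ y ∈ G, 1 ≤ y.1 ∧ y.1 < y.2 ∧ y.2 ≤ n + 1 - j := fun y hy =>
      mem_seg.1 (hGsub hy)
    dsimp only
    rw [Prod.mk.injEq]
    constructor
    · ext x
      simp only [Finset.mem_erase, Finset.mem_filter, Finset.mem_insert, Finset.mem_union,
        Finset.mem_image]
      constructor
      · rintro ⟨hne, (rfl | hxF | ⟨y, hy, rfl⟩), hle⟩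
        · exact absurd rfl hne
        · exact hxF
        · have := hGb y hy; dsimp only at hle; omega
      · intro hx
        have hb := hFb x hx
        refine ⟨?_, Or.inr (Or.inl hx), hb.2.2⟩
        rintro rfl
        exact hF1j hx
    · have hfilter : (insert (1, j) (F ∪ G.image fun p => ((p : ℕ × ℕ).1 + j, p.2 + j))).filter
          (fun p => j + 1 ≤ p.1) = G.image fun p => ((p : ℕ × ℕ).1 + j, p.2 + j) := by
        ext x
        simp only [Finset.mem_filter, Finset.mem_insert, Finset.mem_union, Finset.mem_image]
        constructor
        · rintro ⟨rfl | hxF | hxU, hge⟩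
          · dsimp only at hge; omega
          · have := hFb x hxF; omega
          · exact hxU
        · rintro ⟨y, hy, rfl⟩
          have := hGb y hy
          exact ⟨Or.inr (Or.inr ⟨y, hy, rfl⟩), by dsimp only; omega⟩
      rw [hfilter, Finset.image_image]
      have : ∀ y ∈ G, ((fun p => ((p : ℕ × ℕ).1 - j, p.2 - j))
          ∘ (fun p => ((p : ℕ × ℕ).1 + j, p.2 + j))) y = id y := by
        intro y hy
        simp [Function.comp]
      rw [Finset.image_congr this, Finset.image_id]

lemma fam_rec (n : ℕ) : (fam (n + 1)).card
    = (fam n).card + ∑ j ∈ Finset.Icc 2 (n + 1), (famf j).card * (fam (n + 1 - j)).card := by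
  have hmaps : ∀ E ∈ fam (n + 1), topJ E ∈ insert 0 (Finset.Icc 2 (n + 1)) := by
    intro E hE
    obtain ⟨hEsub, hEg⟩ := Finset.mem_filter.1 hE
    rw [Finset.mem_powerset] at hEsub
    by_cases h0 : topJ E = 0
    · rw [h0]; exact Finset.mem_insert_self _ _
    · have hmem := topJ_mem h0
      have := mem_seg.1 (hEsub hmem)
      refine Finset.mem_insert_of_mem (Finset.mem_Icc.2 ?_)
      dsimp only at this
      omega
  rw [Finset.card_eq_sum_card_fiberwise hmaps, Finset.sum_insert (by simp)]
  congr 1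
  · exact fiber_zero n
  · apply Finset.sum_congr rfl
    intro j hj
    rw [Finset.mem_Icc] at hj
    exact fiber_j n j hj.1 hj.2

lemma fam_card (X : ℕ → ℕ) (hX0 : X 0 = 1)
    (hXrec : ∀ m, X (m + 1) = X m + ∑ k ∈ Finset.range (m + 1), X k * X (m - k)) :
    ∀ m, (fam (m + 1)).card = X m := by
  intro m
  induction m using Nat.strong_induction_on with
  | _ m ih =>
    rcases m with _ | m
    · rw [fam_one, hX0]
    · have hrec := fam_rec (m + 1)
      rw [Finset.sum_Icc_succ_top (show 2 ≤ m + 2 by omega)] at hrec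
      rw [show m + 1 + 1 - (m + 2) = 0 by omega, fam_zero, mul_one] at hrec
      have hSg : ∑ j ∈ Finset.Icc 2 (m + 1), (fam j).card * (fam (m + 1 + 1 - j)).card
          = 2 * ∑ j ∈ Finset.Icc 2 (m + 1), (famf j).card * (fam (m + 1 + 1 - j)).card := by
        rw [Finset.mul_sum]
        apply Finset.sum_congr rfl
        intro j hj
        rw [Finset.mem_Icc] at hj
        rw [fam_double hj.1]
        ring
      have h2 := fam_double (show 2 ≤ m + 2 by omega)
      have hrec' : (fam (m + 2)).card = (fam (m + 1)).card
          + (∑ j ∈ Finset.Icc 2 (m + 1), (famf j).card * (fam (m + 1 + 1 - j)).card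
            + (famf (m + 2)).card) := hrec
      have hkey : (fam (m + 2)).card = 2 * (fam (m + 1)).card
          + ∑ j ∈ Finset.Icc 2 (m + 1), (fam j).card * (fam (m + 1 + 1 - j)).card := by
        omega
      have hX : ∑ j ∈ Finset.Icc 2 (m + 1), (fam j).card * (fam (m + 1 + 1 - j)).card
          = ∑ i ∈ Finset.range m, X (i + 1) * X (m - (i + 1)) := by
        apply Finset.sum_nbij' (i := fun j => j - 2) (j := fun i => i + 2)
        · intro j hj
          rw [Finset.mem_Icc] at hj
          rw [Finset.mem_range]
          omega
        · intro i hi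
          rw [Finset.mem_range] at hi
          rw [Finset.mem_Icc]
          omega
        · intro j hj
          rw [Finset.mem_Icc] at hj
          omega
        · intro i _
          omega
        · intro j hj
          rw [Finset.mem_Icc] at hj
          have e1 : (fam j).card = X (j - 2 + 1) := by
            have := ih (j - 2 + 1) (by omega)
            rwa [show j - 2 + 1 + 1 = j by omega] at this
          have e2 : (fam (m + 1 + 1 - j)).card = X (m - (j - 2 + 1)) := by
            rw [show m + 1 + 1 - j = m - (j - 2 + 1) + 1 by omega]
            exact ih (m - (j - 2 + 1)) (by omega)
          rw [e1, e2]
      rw [hX, ih m (by omega)] at hkey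
      rw [hkey, hXrec m, Finset.sum_range_succ']
      rw [hX0, Nat.sub_zero, one_mul]
      ring

/-- `|R_s|` equals the `(n-1)`-st large Schröder number. -/
theorem card_Rs_eq_schroeder (n : ℕ) (hn : 2 ≤ n) (X : ℕ → ℕ) (hX0 : X 0 = 1)
    (hXrec : ∀ m, X (m + 1) = X m + ∑ k ∈ Finset.range (m + 1), X k * X (m - k)) :
    Nat.card {E : Finset (ℕ × ℕ) // Rs n E} = X (n - 1) := by
  rw [card_Rs_eq n]
  have h := fam_card X hX0 hXrec (n - 1)
  rwa [show n - 1 + 1 = n by omega] at h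
end
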